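/- arXiv:1011.3615 — 5 statements merged into one kernel-verified Lean document; each statement's English description precedes it below -/
import Mathlib

section
/- Let α, β > -1. There exist constants 0 < c ≤ C depending only on α and β such that for all θ, φ ∈ (0,π) one has c · |φ-θ| (θ+φ)^{2α+1} (2π-θ-φ)^{2β+1} ≤ m_{α,β}(B(θ,|φ-θ|)) ≤ C · |φ-θ| (θ+φ)^{2α+1} (2π-θ-φ)^{2β+1}. -/
open Real MeasureTheory Set
open scoped ENNReal

noncomputable def jacobiDensity (α β : ℝ) (x : ℝ) : ℝ :=
  Real.sin (x / 2) ^ (2 * α + 1) * Real.cos (x / 2) ^ (2 * β + 1)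

noncomputable def mJacobi (α β : ℝ) : Measure ℝ :=
  (volume.restrict (Ioo 0 π)).withDensity fun x => ENNReal.ofReal (jacobiDensity α β x)

noncomputable def mBall (α β θ r : ℝ) : ℝ :=
  (mJacobi α β (Ioo (θ - r) (θ + r))).toReal

noncomputable def qK (θ φ u v : ℝ) : ℝ :=
  1 - u * (Real.sin (θ / 2) * Real.sin (φ / 2)) - v * (Real.cos (θ / 2) * Real.cos (φ / 2))

noncomputable def PiMeas (γ : ℝ) : Measure ℝ :=
  if γ = -(1/2) then (2 : ℝ≥0∞)⁻¹ • (Measure.dirac (-1) + Measure.dirac 1)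
  else (volume.restrict (Icc (-1 : ℝ) 1)).withDensity fun u =>
    ENNReal.ofReal (Real.Gamma (γ + 1) / (Real.sqrt π * Real.Gamma (γ + 1/2)) * (1 - u ^ 2) ^ (γ - 1/2))

noncomputable def cJ (α β : ℝ) : ℝ :=
  (2 : ℝ) ^ (-(α + β + 1)) / (mJacobi α β (Ioo 0 π)).toReal

noncomputable def HJ (α β t θ φ : ℝ) : ℝ :=
  cJ α β * Real.sinh (t / 2) *
    ∫ u, ∫ v, (Real.cosh (t / 2) - 1 + qK θ φ u v) ^ (-(α + β + 2)) ∂PiMeas β ∂PiMeas α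

open intervalIntegral


lemma rpow_between {a b x y e : ℝ} (ha : 0 < a) (hx : 0 < x)
    (h1 : a * x ≤ y) (h2 : y ≤ b * x) :
    min (a ^ e) (b ^ e) * x ^ e ≤ y ^ e ∧ y ^ e ≤ max (a ^ e) (b ^ e) * x ^ e := by
  have hy : 0 < y := lt_of_lt_of_le (by positivity) h1
  have hb : 0 < b := by nlinarith
  have hax : (a * x) ^ e = a ^ e * x ^ e := Real.mul_rpow ha.le hx.le
  have hbx : (b * x) ^ e = b ^ e * x ^ e := Real.mul_rpow hb.le hx.le
  have hxe : (0:ℝ) ≤ x ^ e := Real.rpow_nonneg hx.le e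
  rcases le_or_gt 0 e with he | he
  · constructor
    · calc min (a ^ e) (b ^ e) * x ^ e ≤ a ^ e * x ^ e :=
            mul_le_mul_of_nonneg_right (min_le_left _ _) hxe
        _ = (a * x) ^ e := hax.symm
        _ ≤ y ^ e := Real.rpow_le_rpow (by positivity) h1 he
    · calc y ^ e ≤ (b * x) ^ e := Real.rpow_le_rpow hy.le h2 he
        _ = b ^ e * x ^ e := hbx
        _ ≤ max (a ^ e) (b ^ e) * x ^ e :=
            mul_le_mul_of_nonneg_right (le_max_right _ _) hxe
  · constructor
    · calc min (a ^ e) (b ^ e) * x ^ e ≤ b ^ e * x ^ e :=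
            mul_le_mul_of_nonneg_right (min_le_right _ _) hxe
        _ = (b * x) ^ e := hbx.symm
        _ ≤ y ^ e := Real.rpow_le_rpow_of_nonpos hy h2 he.le
    · calc y ^ e ≤ (a * x) ^ e := Real.rpow_le_rpow_of_nonpos (by positivity) h1 he.le
        _ = a ^ e * x ^ e := hax
        _ ≤ max (a ^ e) (b ^ e) * x ^ e :=
            mul_le_mul_of_nonneg_right (le_max_left _ _) hxe

lemma rpow_bounds {lo hi y e : ℝ} (hlo : 0 < lo) (h1 : lo ≤ y) (h2 : y ≤ hi) :
    min (lo ^ e) (hi ^ e) ≤ y ^ e ∧ y ^ e ≤ max (lo ^ e) (hi ^ e) := by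
  simpa using rpow_between (x := 1) hlo one_pos (by simpa using h1) (by simpa using h2)


noncomputable def cONE (p : ℝ) : ℝ := min 1 ((2:ℝ) ^ (-p)) / 2
noncomputable def CONE (p : ℝ) : ℝ := max 1 ((2:ℝ) ^ (-p)) + 2 / (p + 1)

lemma cONE_pos (p : ℝ) : 0 < cONE p := by
  have : (0:ℝ) < (2:ℝ) ^ (-p) := Real.rpow_pos_of_pos two_pos _
  unfold cONE; positivity

lemma CONE_pos {p : ℝ} (hp : -1 < p) : 0 < CONE p := by
  have h1 : (0:ℝ) < (2:ℝ) ^ (-p) := Real.rpow_pos_of_pos two_pos _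
  have h2 : (0:ℝ) < p + 1 := by linarith
  have : (0:ℝ) < max 1 ((2:ℝ) ^ (-p)) := lt_max_of_lt_left one_pos
  unfold CONE; positivity

lemma half_rpow {b p : ℝ} (hb : 0 ≤ b) : (b / 2) ^ p = (2:ℝ) ^ (-p) * b ^ p := by
  rw [Real.div_rpow hb (by norm_num), Real.rpow_neg (by norm_num)]
  ring

lemma one_lower {p a b : ℝ} (hp : -1 < p) (ha : 0 ≤ a) (hab : a ≤ b) :
    cONE p * ((b - a) * b ^ p) ≤ ∫ x in a..b, x ^ p := by
  rcases eq_or_lt_of_le (ha.trans hab) with hb | hb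
  · have hab' : a = b := le_antisymm hab (hb ▸ ha)
    simp [← hab', cONE]
  set a' := max a (b / 2) with ha'
  have haa' : a ≤ a' := le_max_left _ _
  have ha'b : a' ≤ b := max_le hab (by linarith)
  have ha'pos : 0 < a' := lt_max_of_lt_right (by linarith)
  have hint1 : IntervalIntegrable (fun x => x ^ p) volume a a' := intervalIntegrable_rpow' hp
  have hint2 : IntervalIntegrable (fun x => x ^ p) volume a' b := intervalIntegrable_rpow' hp
  have hsplit : (∫ x in a..b, x ^ p) = (∫ x in a..a', x ^ p) + ∫ x in a'..b, x ^ p :=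
    (integral_add_adjacent_intervals hint1 hint2).symm
  have h1 : 0 ≤ ∫ x in a..a', x ^ p :=
    integral_nonneg haa' fun u hu => Real.rpow_nonneg (ha.trans hu.1) _
  have key : min 1 ((2:ℝ) ^ (-p)) * b ^ p * (b - a') ≤ ∫ x in a'..b, x ^ p := by
    have := integral_mono_on (f := fun _ => min 1 ((2:ℝ) ^ (-p)) * b ^ p)
      (g := fun x => x ^ p) ha'b (intervalIntegrable_const) hint2 ?_
    · rw [intervalIntegral.integral_const, smul_eq_mul] at this
      exact le_trans (le_of_eq (by ring)) this
    · intro x hx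
      have hx1 : b / 2 ≤ x := le_trans (le_max_right _ _) hx.1
      have hx0 : 0 < x := lt_of_lt_of_le (by linarith) hx1
      rcases le_or_gt 0 p with hsgn | hsgn
      · calc min 1 ((2:ℝ) ^ (-p)) * b ^ p ≤ (2:ℝ) ^ (-p) * b ^ p :=
              mul_le_mul_of_nonneg_right (min_le_right _ _) (Real.rpow_nonneg hb.le _)
          _ = (b / 2) ^ p := (half_rpow hb.le).symm
          _ ≤ x ^ p := Real.rpow_le_rpow (by linarith) hx1 hsgn
      · calc min 1 ((2:ℝ) ^ (-p)) * b ^ p ≤ 1 * b ^ p :=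
              mul_le_mul_of_nonneg_right (min_le_left _ _) (Real.rpow_nonneg hb.le _)
          _ = b ^ p := one_mul _
          _ ≤ x ^ p := Real.rpow_le_rpow_of_nonpos hx0 hx.2 hsgn.le
  have hba' : (b - a) / 2 ≤ b - a' := by
    rcases max_cases a (b / 2) with ⟨h, _⟩ | ⟨h, _⟩ <;> rw [ha', h] <;> linarith
  calc cONE p * ((b - a) * b ^ p)
      = min 1 ((2:ℝ) ^ (-p)) * b ^ p * ((b - a) / 2) := by unfold cONE; ring
    _ ≤ min 1 ((2:ℝ) ^ (-p)) * b ^ p * (b - a') := by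
        apply mul_le_mul_of_nonneg_left hba'
        have : (0:ℝ) < (2:ℝ) ^ (-p) := Real.rpow_pos_of_pos two_pos _
        have := Real.rpow_nonneg hb.le p
        positivity
    _ ≤ ∫ x in a'..b, x ^ p := key
    _ ≤ (∫ x in a..b, x ^ p) := by rw [hsplit]; linarith

lemma one_upper {p a b : ℝ} (hp : -1 < p) (ha : 0 ≤ a) (hab : a ≤ b) :
    (∫ x in a..b, x ^ p) ≤ CONE p * ((b - a) * b ^ p) := by
  have hp1 : (0:ℝ) < p + 1 := by linarith
  rcases eq_or_lt_of_le (ha.trans hab) with hb | hb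
  · have hab' : a = b := le_antisymm hab (hb ▸ ha)
    simp [← hab']
  have hbp : (0:ℝ) ≤ b ^ p := Real.rpow_nonneg hb.le _
  have hmax : (0:ℝ) ≤ max 1 ((2:ℝ) ^ (-p)) := le_max_of_le_left zero_le_one
  rcases le_or_gt a (b / 2) with hcase | hcase
  · have hint1 : IntervalIntegrable (fun x => x ^ p) volume 0 a := intervalIntegrable_rpow' hp
    have hint2 : IntervalIntegrable (fun x => x ^ p) volume a b := intervalIntegrable_rpow' hp
    have h1 : 0 ≤ ∫ x in (0:ℝ)..a, x ^ p :=
      integral_nonneg ha fun u hu => Real.rpow_nonneg hu.1 _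
    have hval : (∫ x in (0:ℝ)..b, x ^ p) = b ^ (p + 1) / (p + 1) := by
      rw [integral_rpow (Or.inl hp)]
      rw [Real.zero_rpow (by linarith)]
      ring
    have hsplit : (∫ x in (0:ℝ)..b, x ^ p) = (∫ x in (0:ℝ)..a, x ^ p) + ∫ x in a..b, x ^ p :=
      (integral_add_adjacent_intervals hint1 hint2).symm
    have hb1 : b ^ (p + 1) = b * b ^ p := by
      rw [Real.rpow_add_one hb.ne' p]; ring
    have : (∫ x in a..b, x ^ p) ≤ b ^ (p + 1) / (p + 1) := by rw [← hval, hsplit]; linarith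
    calc (∫ x in a..b, x ^ p) ≤ b * b ^ p / (p + 1) := by rw [← hb1]; exact this
      _ ≤ 2 * (b - a) * b ^ p / (p + 1) := by
          have hnum : b * b ^ p ≤ 2 * (b - a) * b ^ p :=
            mul_le_mul_of_nonneg_right (by linarith) hbp
          exact div_le_div_of_nonneg_right hnum hp1.le
      _ = 2 / (p + 1) * ((b - a) * b ^ p) := by ring
      _ ≤ CONE p * ((b - a) * b ^ p) := by
          apply mul_le_mul_of_nonneg_right ?_ (by nlinarith)
          unfold CONE; linarith
  · have hint2 : IntervalIntegrable (fun x => x ^ p) volume a b := intervalIntegrable_rpow' hp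
    have key : (∫ x in a..b, x ^ p) ≤ (b - a) * (max 1 ((2:ℝ) ^ (-p)) * b ^ p) := by
      have := integral_mono_on (f := fun x => x ^ p)
        (g := fun _ => max 1 ((2:ℝ) ^ (-p)) * b ^ p) hab hint2 intervalIntegrable_const ?_
      · rw [intervalIntegral.integral_const, smul_eq_mul] at this
        exact le_trans this (le_of_eq (by ring))
      · intro x hx
        have hx0 : 0 < x := lt_of_le_of_lt (by linarith : (0:ℝ) ≤ b/2) (lt_of_lt_of_le hcase hx.1)
        rcases le_or_gt 0 p with hsgn | hsgn
        · calc x ^ p ≤ b ^ p := Real.rpow_le_rpow hx0.le hx.2 hsgn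
            _ = 1 * b ^ p := (one_mul _).symm
            _ ≤ max 1 ((2:ℝ) ^ (-p)) * b ^ p :=
                mul_le_mul_of_nonneg_right (le_max_left _ _) hbp
        · calc x ^ p ≤ (b / 2) ^ p :=
                Real.rpow_le_rpow_of_nonpos (by linarith) (le_trans hcase.le hx.1) hsgn.le
            _ = (2:ℝ) ^ (-p) * b ^ p := half_rpow hb.le
            _ ≤ max 1 ((2:ℝ) ^ (-p)) * b ^ p :=
                mul_le_mul_of_nonneg_right (le_max_right _ _) hbp
    calc (∫ x in a..b, x ^ p) ≤ (b - a) * (max 1 ((2:ℝ) ^ (-p)) * b ^ p) := key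
      _ = max 1 ((2:ℝ) ^ (-p)) * ((b - a) * b ^ p) := by ring
      _ ≤ CONE p * ((b - a) * b ^ p) := by
          apply mul_le_mul_of_nonneg_right ?_ (by nlinarith)
          unfold CONE
          have : (0:ℝ) < 2 / (p + 1) := by positivity
          linarith


noncomputable def Wf (p q x : ℝ) : ℝ := x ^ p * (π - x) ^ q

lemma Wf_nonneg {p q x : ℝ} (h0 : 0 ≤ x) (hπ : x ≤ π) : 0 ≤ Wf p q x :=
  mul_nonneg (Real.rpow_nonneg h0 _) (Real.rpow_nonneg (by linarith) _)

lemma Wf_measurable (p q : ℝ) : Measurable (Wf p q) := by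
  unfold Wf; fun_prop

lemma intWf_half1 {p q : ℝ} (hp : -1 < p) :
    IntervalIntegrable (Wf p q) volume 0 (π / 2) := by
  have h2 : (0:ℝ) ≤ π / 2 := by positivity
  rw [intervalIntegrable_iff_integrableOn_Ioc_of_le h2]
  set M := max ((π/2) ^ q) (π ^ q) with hM
  have hg : IntegrableOn (fun x => M * x ^ p) (Ioc 0 (π/2)) volume := by
    have := (intervalIntegrable_rpow' (a := 0) (b := π/2) hp).1
    exact this.const_mul M
  refine hg.integrable.mono' ((Wf_measurable p q).aestronglyMeasurable) ?_
  refine (ae_restrict_iff' measurableSet_Ioc).mpr (ae_of_all _ fun x hx => ?_)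
  have hx0 : 0 < x := hx.1
  have hx2 : x ≤ π / 2 := hx.2
  have hb : (π - x) ^ q ≤ M := by
    refine hM ▸ (rpow_bounds (by positivity) (by linarith) (by linarith)).2
  have hWnn : 0 ≤ Wf p q x := Wf_nonneg hx0.le (by linarith [Real.pi_pos])
  rw [Real.norm_of_nonneg hWnn]
  unfold Wf
  calc x ^ p * (π - x) ^ q ≤ x ^ p * M :=
        mul_le_mul_of_nonneg_left hb (Real.rpow_nonneg hx0.le _)
    _ = M * x ^ p := mul_comm _ _

lemma intWf_half2 {p q : ℝ} (hq : -1 < q) :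
    IntervalIntegrable (Wf p q) volume (π / 2) π := by
  have h2 : (π/2 : ℝ) ≤ π := by linarith [Real.pi_pos]
  rw [intervalIntegrable_iff_integrableOn_Ioc_of_le h2]
  set M := max ((π/2) ^ p) (π ^ p) with hM
  have hsub : IntervalIntegrable (fun x => (π - x) ^ q) volume (π/2) π := by
    have := (intervalIntegrable_rpow' (a := 0) (b := π/2) hq).comp_sub_left π
    rw [show π - π/2 = π/2 by ring, sub_zero] at this
    exact this.symm
  have hg : IntegrableOn (fun x => M * (π - x) ^ q) (Ioc (π/2) π) volume := by
    exact ((intervalIntegrable_iff_integrableOn_Ioc_of_le h2).mp hsub).const_mul M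
  refine hg.integrable.mono' ((Wf_measurable p q).aestronglyMeasurable) ?_
  refine (ae_restrict_iff' measurableSet_Ioc).mpr (ae_of_all _ fun x hx => ?_)
  have hx0 : (0:ℝ) < x := lt_of_lt_of_le (by positivity) hx.1.le
  have hb : x ^ p ≤ M := by
    refine hM ▸ (rpow_bounds (by positivity) hx.1.le hx.2).2
  have hWnn : 0 ≤ Wf p q x := Wf_nonneg hx0.le hx.2
  rw [Real.norm_of_nonneg hWnn]
  unfold Wf
  exact mul_le_mul_of_nonneg_right hb (Real.rpow_nonneg (by linarith [hx.2]) _)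

lemma intWf {p q a b : ℝ} (hp : -1 < p) (hq : -1 < q) (h0 : 0 ≤ a) (hab : a ≤ b) (hb : b ≤ π) :
    IntervalIntegrable (Wf p q) volume a b := by
  have h := (intWf_half1 (q := q) hp).trans (intWf_half2 (p := p) hq)
  refine h.mono_set ?_
  rw [uIcc_of_le hab, uIcc_of_le (by linarith [Real.pi_pos] : (0:ℝ) ≤ π)]
  exact Icc_subset_Icc h0 hb

noncomputable def Nint (p q θ r : ℝ) : ℝ :=
  ∫ x in (max (θ - r) 0)..(min (θ + r) π), Wf p q x

noncomputable def Tval (p q θ r : ℝ) : ℝ := r * (θ + r) ^ p * ((π - θ) + r) ^ q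

lemma caseA_bound {p q : ℝ} (hp : -1 < p) (hq : -1 < q) :
    ∃ c C : ℝ, 0 < c ∧ 0 < C ∧ ∀ θ r : ℝ, θ ∈ Ioo 0 π → 0 < r → θ + r ≤ 3 * π / 4 →
      c * Tval p q θ r ≤ Nint p q θ r ∧ Nint p q θ r ≤ C * Tval p q θ r := by
  have hπ : (0:ℝ) < π := Real.pi_pos
  set mq : ℝ := min ((π/4) ^ q) (π ^ q) with hmq
  set Mq : ℝ := max ((π/4) ^ q) (π ^ q) with hMq
  set mq2 : ℝ := min ((π/4) ^ q) ((7*π/4) ^ q) with hmq2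
  set Mq2 : ℝ := max ((π/4) ^ q) ((7*π/4) ^ q) with hMq2
  have hmq_pos : 0 < mq := lt_min (Real.rpow_pos_of_pos (by positivity) _) (Real.rpow_pos_of_pos hπ _)
  have hMq_pos : 0 < Mq := lt_max_of_lt_left (Real.rpow_pos_of_pos (by positivity) _)
  have hmq2_pos : 0 < mq2 := lt_min (Real.rpow_pos_of_pos (by positivity) _) (Real.rpow_pos_of_pos (by positivity) _)
  have hMq2_pos : 0 < Mq2 := lt_max_of_lt_left (Real.rpow_pos_of_pos (by positivity) _)
  have hcONE := cONE_pos p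
  have hCONE := CONE_pos hp
  refine ⟨mq * cONE p / Mq2, Mq * CONE p * 2 / mq2, by positivity, by positivity, ?_⟩
  intro θ r hθ hr hcond
  obtain ⟨hθ0, hθπ⟩ := hθ
  set A := max (θ - r) 0 with hA
  set B := min (θ + r) π with hB
  have hBeq : B = θ + r := min_eq_left (by linarith)
  have h0A : 0 ≤ A := le_max_right _ _
  have hAθ : A ≤ θ := max_le (by linarith) hθ0.le
  have hAB : A ≤ B := le_trans hAθ (hBeq ▸ by linarith)
  have hBπ : B ≤ π := min_le_right _ _
  have hBA_ge : r ≤ B - A := by rw [hBeq]; have := hAθ; linarith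
  have hBA_le : B - A ≤ 2 * r := by
    have : θ - r ≤ A := le_max_left _ _
    rw [hBeq]; linarith
  -- pointwise bounds for (π - x) ^ q on [A, B]
  have hπx : ∀ x ∈ Icc A B, mq ≤ (π - x) ^ q ∧ (π - x) ^ q ≤ Mq := by
    intro x hx
    have h1 : π / 4 ≤ π - x := by
      have : x ≤ θ + r := hBeq ▸ hx.2
      linarith
    have h2 : π - x ≤ π := by have := h0A.trans hx.1; linarith
    exact rpow_bounds (by positivity) h1 h2
  -- bounds for ((π - θ) + r) ^ q
  have hθr : mq2 ≤ ((π - θ) + r) ^ q ∧ ((π - θ) + r) ^ q ≤ Mq2 := by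
    refine rpow_bounds (by positivity) (by linarith) (by linarith)
  have hWint : IntervalIntegrable (Wf p q) volume A B := intWf hp hq h0A hAB hBπ
  have hrint : IntervalIntegrable (fun x => x ^ p) volume A B := intervalIntegrable_rpow' hp
  have hIlow : mq * ∫ x in A..B, x ^ p ≤ Nint p q θ r := by
    rw [← intervalIntegral.integral_const_mul]
    refine integral_mono_on hAB (hrint.const_mul mq) hWint fun x hx => ?_
    have hx0 : 0 ≤ x := h0A.trans hx.1
    unfold Wf
    calc mq * x ^ p = x ^ p * mq := mul_comm _ _
      _ ≤ x ^ p * (π - x) ^ q :=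
          mul_le_mul_of_nonneg_left (hπx x hx).1 (Real.rpow_nonneg hx0 _)
  have hIhigh : Nint p q θ r ≤ Mq * ∫ x in A..B, x ^ p := by
    rw [← intervalIntegral.integral_const_mul]
    refine integral_mono_on hAB hWint (hrint.const_mul Mq) fun x hx => ?_
    have hx0 : 0 ≤ x := h0A.trans hx.1
    unfold Wf
    calc x ^ p * (π - x) ^ q ≤ x ^ p * Mq :=
          mul_le_mul_of_nonneg_left (hπx x hx).2 (Real.rpow_nonneg hx0 _)
      _ = Mq * x ^ p := mul_comm _ _
  have hone_low := one_lower hp h0A hAB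
  have hone_high := one_upper hp h0A hAB
  have hBApos : 0 ≤ (θ + r) ^ p := Real.rpow_nonneg (by linarith) _
  have hBp : B ^ p = (θ + r) ^ p := by rw [hBeq]
  constructor
  · calc mq * cONE p / Mq2 * Tval p q θ r
        ≤ mq * cONE p / Mq2 * (r * (θ + r) ^ p * Mq2) := by
          refine mul_le_mul_of_nonneg_left ?_ (by positivity)
          exact mul_le_mul_of_nonneg_left hθr.2 (by positivity)
      _ = mq * (cONE p * (r * (θ + r) ^ p)) := by field_simp
      _ ≤ mq * (cONE p * ((B - A) * B ^ p)) := by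
          refine mul_le_mul_of_nonneg_left (mul_le_mul_of_nonneg_left ?_ hcONE.le) hmq_pos.le
          rw [hBp]
          exact mul_le_mul_of_nonneg_right hBA_ge hBApos
      _ ≤ mq * ∫ x in A..B, x ^ p := mul_le_mul_of_nonneg_left hone_low hmq_pos.le
      _ ≤ Nint p q θ r := hIlow
  · calc Nint p q θ r ≤ Mq * ∫ x in A..B, x ^ p := hIhigh
      _ ≤ Mq * (CONE p * ((B - A) * B ^ p)) := mul_le_mul_of_nonneg_left hone_high hMq_pos.le
      _ ≤ Mq * (CONE p * (2 * r * (θ + r) ^ p)) := by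
          refine mul_le_mul_of_nonneg_left (mul_le_mul_of_nonneg_left ?_ hCONE.le) hMq_pos.le
          rw [hBp]
          exact mul_le_mul_of_nonneg_right hBA_le hBApos
      _ = Mq * CONE p * 2 / mq2 * (r * (θ + r) ^ p * mq2) := by field_simp
      _ ≤ Mq * CONE p * 2 / mq2 * Tval p q θ r := by
          refine mul_le_mul_of_nonneg_left ?_ (by positivity)
          exact mul_le_mul_of_nonneg_left hθr.1 (by positivity)

lemma caseB_bound {p q : ℝ} (hp : -1 < p) (hq : -1 < q) :
    ∃ c C : ℝ, 0 < c ∧ 0 < C ∧ ∀ θ r : ℝ, θ ∈ Ioo 0 π → 0 < r → (π - θ) + r ≤ 3 * π / 4 →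
      c * Tval p q θ r ≤ Nint p q θ r ∧ Nint p q θ r ≤ C * Tval p q θ r := by
  have hπ : (0:ℝ) < π := Real.pi_pos
  set mp : ℝ := min ((π/4) ^ p) (π ^ p) with hmp
  set Mp : ℝ := max ((π/4) ^ p) (π ^ p) with hMp
  set mp2 : ℝ := min ((π/4) ^ p) ((7*π/4) ^ p) with hmp2
  set Mp2 : ℝ := max ((π/4) ^ p) ((7*π/4) ^ p) with hMp2
  have hmp_pos : 0 < mp := lt_min (Real.rpow_pos_of_pos (by positivity) _) (Real.rpow_pos_of_pos hπ _)
  have hMp_pos : 0 < Mp := lt_max_of_lt_left (Real.rpow_pos_of_pos (by positivity) _)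
  have hmp2_pos : 0 < mp2 := lt_min (Real.rpow_pos_of_pos (by positivity) _) (Real.rpow_pos_of_pos (by positivity) _)
  have hMp2_pos : 0 < Mp2 := lt_max_of_lt_left (Real.rpow_pos_of_pos (by positivity) _)
  have hcONE := cONE_pos q
  have hCONE := CONE_pos hq
  refine ⟨mp * cONE q / Mp2, Mp * CONE q * 2 / mp2, by positivity, by positivity, ?_⟩
  intro θ r hθ hr hcond
  obtain ⟨hθ0, hθπ⟩ := hθ
  have hrθ : r ≤ θ - π / 4 := by linarith
  set A := max (θ - r) 0 with hA
  set B := min (θ + r) π with hB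
  have hAeq : A = θ - r := max_eq_left (by linarith)
  have h0A : 0 ≤ A := le_max_right _ _
  have hAθ : A ≤ θ := max_le (by linarith) hθ0.le
  have hθB : θ ≤ B := le_min (by linarith) hθπ.le
  have hAB : A ≤ B := hAθ.trans hθB
  have hBπ : B ≤ π := min_le_right _ _
  -- the reflected endpoints
  set a' := max ((π - θ) - r) 0 with ha'
  set b' := (π - θ) + r with hb'
  have h0a' : 0 ≤ a' := le_max_right _ _
  have ha'θ : a' ≤ π - θ := max_le (by linarith) (by linarith)
  have ha'b' : a' ≤ b' := ha'θ.trans (by rw [hb']; linarith)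
  have hπB : π - B = a' := by
    rcases le_total (θ + r) π with h | h
    · rw [hB, min_eq_left h, ha', max_eq_left (by linarith)]; ring
    · rw [hB, min_eq_right h, ha', max_eq_right (by linarith)]; ring
  have hπA : π - A = b' := by rw [hAeq, hb']; ring
  have hba_ge : r ≤ b' - a' := by rw [hb']; linarith [ha'θ]
  have hba_le : b' - a' ≤ 2 * r := by
    have : (π - θ) - r ≤ a' := le_max_left _ _
    rw [hb']; linarith
  -- pointwise bounds for x ^ p on [A, B]
  have hxp : ∀ x ∈ Icc A B, mp ≤ x ^ p ∧ x ^ p ≤ Mp := by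
    intro x hx
    have h1 : π / 4 ≤ x := le_trans (by rw [hAeq]; linarith) hx.1
    exact rpow_bounds (by positivity) h1 (hx.2.trans hBπ)
  -- bounds for (θ + r) ^ p
  have hθr : mp2 ≤ (θ + r) ^ p ∧ (θ + r) ^ p ≤ Mp2 := by
    refine rpow_bounds (by positivity) (by linarith) (by linarith)
  have hWint : IntervalIntegrable (Wf p q) volume A B := intWf hp hq h0A hAB hBπ
  have hqint : IntervalIntegrable (fun x => (π - x) ^ q) volume A B := by
    have h := (intervalIntegrable_rpow' (a := π - B) (b := π - A) hq).comp_sub_left π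
    rw [sub_sub_cancel, sub_sub_cancel] at h
    exact h.symm
  have hIq : (∫ x in A..B, (π - x) ^ q) = ∫ y in a'..b', y ^ q := by
    rw [intervalIntegral.integral_comp_sub_left (fun y => y ^ q) π, hπB, hπA]
  have hIlow : mp * ∫ x in A..B, (π - x) ^ q ≤ Nint p q θ r := by
    rw [← intervalIntegral.integral_const_mul]
    refine integral_mono_on hAB (hqint.const_mul mp) hWint fun x hx => ?_
    have hx0 : 0 ≤ π - x := by linarith [hx.2.trans hBπ]
    unfold Wf
    exact mul_le_mul_of_nonneg_right (hxp x hx).1 (Real.rpow_nonneg hx0 _)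
  have hIhigh : Nint p q θ r ≤ Mp * ∫ x in A..B, (π - x) ^ q := by
    rw [← intervalIntegral.integral_const_mul]
    refine integral_mono_on hAB hWint (hqint.const_mul Mp) fun x hx => ?_
    have hx0 : 0 ≤ π - x := by linarith [hx.2.trans hBπ]
    unfold Wf
    exact mul_le_mul_of_nonneg_right (hxp x hx).2 (Real.rpow_nonneg hx0 _)
  have hone_low := one_lower hq h0a' ha'b'
  have hone_high := one_upper hq h0a' ha'b'
  have hbq_nn : 0 ≤ b' ^ q := Real.rpow_nonneg (by rw [hb']; linarith) _
  have hTval : Tval p q θ r = r * (θ + r) ^ p * b' ^ q := by rw [Tval, hb']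
  constructor
  · calc mp * cONE q / Mp2 * Tval p q θ r
        ≤ mp * cONE q / Mp2 * (r * Mp2 * b' ^ q) := by
          rw [hTval]
          refine mul_le_mul_of_nonneg_left ?_ (by positivity)
          exact mul_le_mul_of_nonneg_right (mul_le_mul_of_nonneg_left hθr.2 hr.le) hbq_nn
      _ = mp * (cONE q * (r * b' ^ q)) := by field_simp
      _ ≤ mp * (cONE q * ((b' - a') * b' ^ q)) := by
          refine mul_le_mul_of_nonneg_left (mul_le_mul_of_nonneg_left ?_ hcONE.le) hmp_pos.le
          exact mul_le_mul_of_nonneg_right hba_ge hbq_nn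
      _ ≤ mp * ∫ y in a'..b', y ^ q := mul_le_mul_of_nonneg_left hone_low hmp_pos.le
      _ = mp * ∫ x in A..B, (π - x) ^ q := by rw [hIq]
      _ ≤ Nint p q θ r := hIlow
  · calc Nint p q θ r ≤ Mp * ∫ x in A..B, (π - x) ^ q := hIhigh
      _ = Mp * ∫ y in a'..b', y ^ q := by rw [hIq]
      _ ≤ Mp * (CONE q * ((b' - a') * b' ^ q)) := mul_le_mul_of_nonneg_left hone_high hMp_pos.le
      _ ≤ Mp * (CONE q * (2 * r * b' ^ q)) := by
          refine mul_le_mul_of_nonneg_left (mul_le_mul_of_nonneg_left ?_ hCONE.le) hMp_pos.le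
          exact mul_le_mul_of_nonneg_right hba_le hbq_nn
      _ = Mp * CONE q * 2 / mp2 * (r * mp2 * b' ^ q) := by field_simp
      _ ≤ Mp * CONE q * 2 / mp2 * Tval p q θ r := by
          rw [hTval]
          refine mul_le_mul_of_nonneg_left ?_ (by positivity)
          exact mul_le_mul_of_nonneg_right (mul_le_mul_of_nonneg_left hθr.1 hr.le) hbq_nn

lemma caseC_bound {p q : ℝ} (hp : -1 < p) (hq : -1 < q) :
    ∃ c C : ℝ, 0 < c ∧ 0 < C ∧ ∀ θ r : ℝ, θ ∈ Ioo 0 π → 0 < r → r ≤ π → π / 4 < r →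
      c * Tval p q θ r ≤ Nint p q θ r ∧ Nint p q θ r ≤ C * Tval p q θ r := by
  have hπ : (0:ℝ) < π := Real.pi_pos
  set mp : ℝ := min ((π/16) ^ p) (π ^ p) with hmp
  set mq : ℝ := min ((π/16) ^ q) (π ^ q) with hmq
  set mp4 : ℝ := min ((π/4) ^ p) ((2*π) ^ p) with hmp4
  set Mp4 : ℝ := max ((π/4) ^ p) ((2*π) ^ p) with hMp4
  set mq4 : ℝ := min ((π/4) ^ q) ((2*π) ^ q) with hmq4
  set Mq4 : ℝ := max ((π/4) ^ q) ((2*π) ^ q) with hMq4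
  have hmp_pos : 0 < mp := lt_min (Real.rpow_pos_of_pos (by positivity) _) (Real.rpow_pos_of_pos hπ _)
  have hmq_pos : 0 < mq := lt_min (Real.rpow_pos_of_pos (by positivity) _) (Real.rpow_pos_of_pos hπ _)
  have hmp4_pos : 0 < mp4 := lt_min (Real.rpow_pos_of_pos (by positivity) _) (Real.rpow_pos_of_pos (by positivity) _)
  have hMp4_pos : 0 < Mp4 := lt_max_of_lt_left (Real.rpow_pos_of_pos (by positivity) _)
  have hmq4_pos : 0 < mq4 := lt_min (Real.rpow_pos_of_pos (by positivity) _) (Real.rpow_pos_of_pos (by positivity) _)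
  have hMq4_pos : 0 < Mq4 := lt_max_of_lt_left (Real.rpow_pos_of_pos (by positivity) _)
  set Itot : ℝ := ∫ x in (0:ℝ)..π, Wf p q x with hItot
  have hItot_nn : 0 ≤ Itot :=
    integral_nonneg hπ.le fun x hx => Wf_nonneg hx.1 hx.2
  refine ⟨π / 8 * (mp * mq) / (π * Mp4 * Mq4), Itot / (π / 4 * mp4 * mq4) + 1,
    by positivity, by positivity, ?_⟩
  intro θ r hθ hr hrπ hr4
  obtain ⟨hθ0, hθπ⟩ := hθ
  set A := max (θ - r) 0 with hA
  set B := min (θ + r) π with hB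
  have h0A : 0 ≤ A := le_max_right _ _
  have hAθ : A ≤ θ := max_le (by linarith) hθ0.le
  have hθB : θ ≤ B := le_min (by linarith) hθπ.le
  have hAB : A ≤ B := hAθ.trans hθB
  have hBπ : B ≤ π := min_le_right _ _
  have hBA : π / 4 ≤ B - A := by
    rcases max_cases (θ - r) 0 with ⟨h1, h1'⟩ | ⟨h1, h1'⟩ <;>
      rcases min_cases (θ + r) π with ⟨h2, h2'⟩ | ⟨h2, h2'⟩ <;> rw [hA, h1, hB, h2] <;> linarith
  -- bounds on (θ+r)^p and ((π-θ)+r)^q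
  have hθrp : mp4 ≤ (θ + r) ^ p ∧ (θ + r) ^ p ≤ Mp4 :=
    rpow_bounds (by positivity) (by linarith) (by linarith)
  have hθrq : mq4 ≤ ((π - θ) + r) ^ q ∧ ((π - θ) + r) ^ q ≤ Mq4 :=
    rpow_bounds (by positivity) (by linarith) (by linarith)
  constructor
  · -- lower bound
    set A' := A + (B - A) / 4 with hA'
    set B' := B - (B - A) / 4 with hB'
    have hAA' : A ≤ A' := by rw [hA']; linarith
    have hA'B' : A' ≤ B' := by rw [hA', hB']; linarith
    have hB'B : B' ≤ B := by rw [hB']; linarith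
    have hsplit1 : (∫ x in A..B, Wf p q x)
        = (∫ x in A..A', Wf p q x) + ∫ x in A'..B, Wf p q x :=
      (integral_add_adjacent_intervals (intWf hp hq h0A hAA' (by linarith))
        (intWf hp hq (by linarith) (hA'B'.trans hB'B) hBπ)).symm
    have hsplit2 : (∫ x in A'..B, Wf p q x)
        = (∫ x in A'..B', Wf p q x) + ∫ x in B'..B, Wf p q x :=
      (integral_add_adjacent_intervals (intWf hp hq (by linarith) hA'B' (by linarith))
        (intWf hp hq (by linarith) hB'B hBπ)).symm
    have hnn1 : 0 ≤ ∫ x in A..A', Wf p q x :=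
      integral_nonneg hAA' fun x hx => Wf_nonneg (h0A.trans hx.1) (by linarith [hx.2])
    have hnn2 : 0 ≤ ∫ x in B'..B, Wf p q x :=
      integral_nonneg hB'B fun x hx => Wf_nonneg (by linarith [hx.1]) (hx.2.trans hBπ)
    have hmid : π / 8 * (mp * mq) ≤ ∫ x in A'..B', Wf p q x := by
      have hmono := integral_mono_on (f := fun _ => mp * mq) (g := Wf p q) hA'B'
        intervalIntegrable_const (intWf hp hq (by linarith) hA'B' (by linarith)) ?_
      · rw [intervalIntegral.integral_const, smul_eq_mul] at hmono
        refine le_trans ?_ hmono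
        have h8 : π / 8 ≤ B' - A' := by rw [hA', hB']; linarith
        exact mul_le_mul_of_nonneg_right h8 (by positivity)
      · intro x hx
        have hx1 : π / 16 ≤ x := by
          have := hx.1; rw [hA'] at this; linarith [h0A]
        have hx2 : π / 16 ≤ π - x := by
          have := hx.2; rw [hB'] at this; linarith [hBπ]
        have hxπ : x ≤ π := by linarith
        have h1 : mp ≤ x ^ p := (rpow_bounds (by positivity) hx1 hxπ).1
        have h2 : mq ≤ (π - x) ^ q := (rpow_bounds (by positivity) hx2 (by linarith)).1
        exact mul_le_mul h1 h2 hmq_pos.le (Real.rpow_nonneg (by linarith) _)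
    have hN : π / 8 * (mp * mq) ≤ Nint p q θ r := by
      rw [Nint, ← hA, ← hB, hsplit1, hsplit2]; linarith
    have hT : Tval p q θ r ≤ π * Mp4 * Mq4 := by
      rw [Tval]
      refine mul_le_mul (mul_le_mul hrπ hθrp.2 (Real.rpow_nonneg (by linarith) _) hπ.le)
        hθrq.2 (Real.rpow_nonneg (by linarith) _) (by positivity)
    calc π / 8 * (mp * mq) / (π * Mp4 * Mq4) * Tval p q θ r
        ≤ π / 8 * (mp * mq) / (π * Mp4 * Mq4) * (π * Mp4 * Mq4) :=
          mul_le_mul_of_nonneg_left hT (by positivity)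
      _ = π / 8 * (mp * mq) := by field_simp
      _ ≤ Nint p q θ r := hN
  · -- upper bound
    have hsplit1 : (∫ x in (0:ℝ)..π, Wf p q x)
        = (∫ x in (0:ℝ)..A, Wf p q x) + ∫ x in A..π, Wf p q x :=
      (integral_add_adjacent_intervals (intWf hp hq le_rfl h0A (by linarith))
        (intWf hp hq h0A (by linarith) le_rfl)).symm
    have hsplit2 : (∫ x in A..π, Wf p q x)
        = (∫ x in A..B, Wf p q x) + ∫ x in B..π, Wf p q x :=
      (integral_add_adjacent_intervals (intWf hp hq h0A hAB hBπ)
        (intWf hp hq (h0A.trans hAB) hBπ le_rfl)).symm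
    have hnn1 : 0 ≤ ∫ x in (0:ℝ)..A, Wf p q x :=
      integral_nonneg h0A fun x hx => Wf_nonneg hx.1 (by linarith [hx.2])
    have hnn2 : 0 ≤ ∫ x in B..π, Wf p q x :=
      integral_nonneg hBπ fun x hx => Wf_nonneg ((h0A.trans hAB).trans hx.1) hx.2
    have hN : Nint p q θ r ≤ Itot := by
      rw [Nint, ← hA, ← hB, hItot, hsplit1, hsplit2]; linarith
    have hT : π / 4 * mp4 * mq4 ≤ Tval p q θ r := by
      rw [Tval]
      refine mul_le_mul (mul_le_mul hr4.le hθrp.1 hmp4_pos.le (by linarith))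
        hθrq.1 hmq4_pos.le (by positivity)
    calc Nint p q θ r ≤ Itot := hN
      _ = Itot / (π / 4 * mp4 * mq4) * (π / 4 * mp4 * mq4) := by field_simp
      _ ≤ (Itot / (π / 4 * mp4 * mq4) + 1) * Tval p q θ r := by
          refine mul_le_mul ?_ hT (by positivity) ?_
          · linarith
          · positivity

lemma two_bound {p q : ℝ} (hp : -1 < p) (hq : -1 < q) :
    ∃ c C : ℝ, 0 < c ∧ 0 < C ∧ ∀ θ r : ℝ, θ ∈ Ioo 0 π → 0 < r → r ≤ π →
      c * Tval p q θ r ≤ Nint p q θ r ∧ Nint p q θ r ≤ C * Tval p q θ r := by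
  obtain ⟨cA, CA, hcA, hCA, hA⟩ := caseA_bound hp hq
  obtain ⟨cB, CB, hcB, hCB, hB⟩ := caseB_bound hp hq
  obtain ⟨cC, CC, hcC, hCC, hC⟩ := caseC_bound hp hq
  refine ⟨min cA (min cB cC), max CA (max CB CC),
    lt_min hcA (lt_min hcB hcC), lt_max_of_lt_left hCA, ?_⟩
  intro θ r hθ hr hrπ
  have hT_nn : 0 ≤ Tval p q θ r := by
    have h1 := hθ.1; have h2 := hθ.2
    rw [Tval]
    exact mul_nonneg (mul_nonneg hr.le (Real.rpow_nonneg (by linarith) _))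
      (Real.rpow_nonneg (by linarith) _)
  by_cases h1 : θ + r ≤ 3 * π / 4
  · obtain ⟨hl, hu⟩ := hA θ r hθ hr h1
    exact ⟨le_trans (mul_le_mul_of_nonneg_right (min_le_left _ _) hT_nn) hl,
      hu.trans (mul_le_mul_of_nonneg_right (le_max_left _ _) hT_nn)⟩
  · by_cases h2 : (π - θ) + r ≤ 3 * π / 4
    · obtain ⟨hl, hu⟩ := hB θ r hθ hr h2
      refine ⟨le_trans (mul_le_mul_of_nonneg_right ?_ hT_nn) hl,
        hu.trans (mul_le_mul_of_nonneg_right ?_ hT_nn)⟩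
      · exact (min_le_right _ _).trans (min_le_left _ _)
      · exact (le_max_left CB CC).trans (le_max_right CA _)
    · have h4 : π / 4 < r := by push_neg at h1 h2; linarith
      obtain ⟨hl, hu⟩ := hC θ r hθ hr hrπ h4
      refine ⟨le_trans (mul_le_mul_of_nonneg_right ?_ hT_nn) hl,
        hu.trans (mul_le_mul_of_nonneg_right ?_ hT_nn)⟩
      · exact (min_le_right _ _).trans (min_le_right _ _)
      · exact (le_max_right CB CC).trans (le_max_right CA _)

lemma jacobiDensity_measurable (α β : ℝ) : Measurable (jacobiDensity α β) := by
  unfold jacobiDensity; fun_prop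

lemma jacobiDensity_nonneg {α β x : ℝ} (h0 : 0 ≤ x) (hπ : x ≤ π) :
    0 ≤ jacobiDensity α β x := by
  have hπ0 := Real.pi_pos
  have hs : 0 ≤ Real.sin (x / 2) :=
    Real.sin_nonneg_of_nonneg_of_le_pi (by linarith) (by linarith)
  have hc : 0 ≤ Real.cos (x / 2) :=
    Real.cos_nonneg_of_mem_Icc ⟨by linarith, by linarith⟩
  exact mul_nonneg (Real.rpow_nonneg hs _) (Real.rpow_nonneg hc _)

lemma density_comp (α β : ℝ) :
    ∃ k K : ℝ, 0 < k ∧ 0 < K ∧ ∀ x ∈ Ioo (0:ℝ) π,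
      k * Wf (2*α+1) (2*β+1) x ≤ jacobiDensity α β x ∧
      jacobiDensity α β x ≤ K * Wf (2*α+1) (2*β+1) x := by
  have hπ : (0:ℝ) < π := Real.pi_pos
  set p := 2*α+1
  set q := 2*β+1
  set mp : ℝ := min ((1/π) ^ p) ((1/2) ^ p) with hmp
  set Mp : ℝ := max ((1/π) ^ p) ((1/2) ^ p) with hMp
  set mq : ℝ := min ((1/π) ^ q) ((1/2) ^ q) with hmq
  set Mq : ℝ := max ((1/π) ^ q) ((1/2) ^ q) with hMq
  have hmp_pos : 0 < mp := lt_min (Real.rpow_pos_of_pos (by positivity) _) (Real.rpow_pos_of_pos (by norm_num) _)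
  have hMp_pos : 0 < Mp := lt_max_of_lt_left (Real.rpow_pos_of_pos (by positivity) _)
  have hmq_pos : 0 < mq := lt_min (Real.rpow_pos_of_pos (by positivity) _) (Real.rpow_pos_of_pos (by norm_num) _)
  have hMq_pos : 0 < Mq := lt_max_of_lt_left (Real.rpow_pos_of_pos (by positivity) _)
  refine ⟨mp * mq, Mp * Mq, by positivity, by positivity, ?_⟩
  intro x hx
  obtain ⟨hx0, hxπ⟩ := hx
  have hsin1 : 1/π * x ≤ Real.sin (x / 2) := by
    have := Real.mul_le_sin (x := x/2) (by linarith) (by linarith)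
    calc 1/π * x = 2/π * (x/2) := by ring
      _ ≤ Real.sin (x/2) := this
  have hsin2 : Real.sin (x / 2) ≤ 1/2 * x := by
    have := Real.sin_le (by linarith : 0 ≤ x/2)
    linarith
  have hcos0 : Real.cos (x / 2) = Real.sin ((π - x) / 2) := by
    rw [show (π - x)/2 = π/2 - x/2 by ring, Real.sin_pi_div_two_sub]
  have hcos1 : 1/π * (π - x) ≤ Real.cos (x / 2) := by
    rw [hcos0]
    have := Real.mul_le_sin (x := (π - x)/2) (by linarith) (by linarith)
    calc 1/π * (π - x) = 2/π * ((π - x)/2) := by ring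
      _ ≤ Real.sin ((π - x)/2) := this
  have hcos2 : Real.cos (x / 2) ≤ 1/2 * (π - x) := by
    rw [hcos0]
    have := Real.sin_le (by linarith : 0 ≤ (π - x)/2)
    linarith
  have hs := rpow_between (e := p) (by positivity : (0:ℝ) < 1/π) hx0 hsin1 hsin2
  have hc := rpow_between (e := q) (by positivity : (0:ℝ) < 1/π)
    (by linarith : (0:ℝ) < π - x) hcos1 hcos2
  have hsnn : 0 ≤ Real.sin (x/2) := by
    have : (0:ℝ) ≤ 1/π * x := by positivity
    linarith
  have hxp_nn : 0 ≤ x ^ p := Real.rpow_nonneg hx0.le _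
  have hπxq_nn : 0 ≤ (π - x) ^ q := Real.rpow_nonneg (by linarith) _
  constructor
  · calc mp * mq * Wf p q x = (mp * x ^ p) * (mq * (π - x) ^ q) := by rw [Wf]; ring
      _ ≤ Real.sin (x/2) ^ p * Real.cos (x/2) ^ q := by
          refine mul_le_mul hs.1 hc.1 (by positivity) (Real.rpow_nonneg hsnn _)
      _ = jacobiDensity α β x := rfl
  · calc jacobiDensity α β x = Real.sin (x/2) ^ p * Real.cos (x/2) ^ q := rfl
      _ ≤ (Mp * x ^ p) * (Mq * (π - x) ^ q) := by
          refine mul_le_mul hs.2 hc.2 (Real.rpow_nonneg ?_ _) (by positivity)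
          rw [hcos0]
          exact Real.sin_nonneg_of_nonneg_of_le_pi (by linarith) (by linarith)
      _ = Mp * Mq * Wf p q x := by rw [Wf]; ring

lemma mBall_repr (α β θ r : ℝ) :
    mBall α β θ r
      = ∫ x in Ioo (max (θ - r) 0) (min (θ + r) π), jacobiDensity α β x := by
  have h1 : mJacobi α β (Ioo (θ - r) (θ + r))
      = ∫⁻ x in Ioo (max (θ - r) 0) (min (θ + r) π),
          ENNReal.ofReal (jacobiDensity α β x) ∂volume := by
    rw [mJacobi, withDensity_apply _ measurableSet_Ioo,
      Measure.restrict_restrict measurableSet_Ioo, Ioo_inter_Ioo]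
  rw [mBall, h1]
  rw [integral_eq_lintegral_of_nonneg_ae ?_ ?_]
  · refine (ae_restrict_iff' measurableSet_Ioo).mpr (ae_of_all _ fun x hx => ?_)
    have h0 : 0 ≤ x := le_trans (le_max_right _ _) hx.1.le
    have hπ' : x ≤ π := hx.2.le.trans (min_le_right _ _)
    exact jacobiDensity_nonneg h0 hπ'
  · exact (jacobiDensity_measurable α β).aestronglyMeasurable

lemma mBall_compare (α β : ℝ) (hα : -1 < α) (hβ : -1 < β) :
    ∃ k K : ℝ, 0 < k ∧ 0 < K ∧ ∀ θ r : ℝ, θ ∈ Ioo 0 π → 0 < r →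
      k * Nint (2*α+1) (2*β+1) θ r ≤ mBall α β θ r ∧
      mBall α β θ r ≤ K * Nint (2*α+1) (2*β+1) θ r := by
  have hp : -1 < 2*α+1 := by linarith
  have hq : -1 < 2*β+1 := by linarith
  obtain ⟨k, K, hk, hK, hcomp⟩ := density_comp α β
  refine ⟨k, K, hk, hK, ?_⟩
  intro θ r hθ hr
  obtain ⟨hθ0, hθπ⟩ := hθ
  set A := max (θ - r) 0 with hA
  set B := min (θ + r) π with hB
  have h0A : 0 ≤ A := le_max_right _ _
  have hAθ : A ≤ θ := max_le (by linarith) hθ0.le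
  have hθB : θ ≤ B := le_min (by linarith) hθπ.le
  have hAB : A ≤ B := hAθ.trans hθB
  have hBπ : B ≤ π := min_le_right _ _
  have hsub : Ioo A B ⊆ Ioo 0 π := fun x hx =>
    ⟨lt_of_le_of_lt h0A hx.1, lt_of_lt_of_le hx.2 hBπ⟩
  have hWfint : IntegrableOn (Wf (2*α+1) (2*β+1)) (Ioo A B) volume :=
    ((intWf hp hq h0A hAB hBπ).1).mono_set Ioo_subset_Ioc_self
  have hwint : IntegrableOn (jacobiDensity α β) (Ioo A B) volume := by
    refine (hWfint.const_mul K).mono'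
      ((jacobiDensity_measurable α β).aestronglyMeasurable) ?_
    refine (ae_restrict_iff' measurableSet_Ioo).mpr (ae_of_all _ fun x hx => ?_)
    have hx' := hsub hx
    rw [Real.norm_of_nonneg (jacobiDensity_nonneg hx'.1.le hx'.2.le)]
    exact (hcomp x hx').2
  have hrepr := mBall_repr α β θ r
  have hNint : Nint (2*α+1) (2*β+1) θ r = ∫ x in Ioo A B, Wf (2*α+1) (2*β+1) x := by
    rw [Nint, intervalIntegral.integral_of_le hAB, integral_Ioc_eq_integral_Ioo]
  constructor
  · rw [hrepr, hNint, ← MeasureTheory.integral_const_mul]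
    refine setIntegral_mono_on (hWfint.const_mul k) hwint measurableSet_Ioo
      fun x hx => (hcomp x (hsub hx)).1
  · rw [hrepr, hNint, ← MeasureTheory.integral_const_mul]
    refine setIntegral_mono_on hwint (hWfint.const_mul K) measurableSet_Ioo
      fun x hx => (hcomp x (hsub hx)).2

theorem stmt9 (α β : ℝ) (hα : -1 < α) (hβ : -1 < β) :
    ∃ c C : ℝ, 0 < c ∧ c ≤ C ∧ ∀ θ φ : ℝ, θ ∈ Ioo 0 π → φ ∈ Ioo 0 π →
      c * (|φ - θ| * (θ + φ) ^ (2 * α + 1) * (2 * π - θ - φ) ^ (2 * β + 1))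
          ≤ mBall α β θ |φ - θ| ∧
      mBall α β θ |φ - θ|
          ≤ C * (|φ - θ| * (θ + φ) ^ (2 * α + 1) * (2 * π - θ - φ) ^ (2 * β + 1)) := by
  have hπ : (0:ℝ) < π := Real.pi_pos
  have hp : -1 < 2*α+1 := by linarith
  have hq : -1 < 2*β+1 := by linarith
  obtain ⟨k, K, hk, hK, hmb⟩ := mBall_compare α β hα hβ
  obtain ⟨c2, C2, hc2, hC2, h2b⟩ := two_bound hp hq
  set ma : ℝ := min ((1/2:ℝ) ^ (2*α+1)) ((2:ℝ) ^ (2*α+1)) with hma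
  set Ma : ℝ := max ((1/2:ℝ) ^ (2*α+1)) ((2:ℝ) ^ (2*α+1)) with hMa
  set mb : ℝ := min ((1/2:ℝ) ^ (2*β+1)) ((2:ℝ) ^ (2*β+1)) with hmb'
  set Mb : ℝ := max ((1/2:ℝ) ^ (2*β+1)) ((2:ℝ) ^ (2*β+1)) with hMb
  have hma_pos : 0 < ma := lt_min (Real.rpow_pos_of_pos (by norm_num) _) (Real.rpow_pos_of_pos (by norm_num) _)
  have hMa_pos : 0 < Ma := lt_max_of_lt_left (Real.rpow_pos_of_pos (by norm_num) _)
  have hmb_pos : 0 < mb := lt_min (Real.rpow_pos_of_pos (by norm_num) _) (Real.rpow_pos_of_pos (by norm_num) _)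
  have hMb_pos : 0 < Mb := lt_max_of_lt_left (Real.rpow_pos_of_pos (by norm_num) _)
  refine ⟨k * c2 / (Ma * Mb), max (k * c2 / (Ma * Mb)) (K * C2 / (ma * mb)),
    by positivity, le_max_left _ _, ?_⟩
  intro θ φ hθ hφ
  rcases eq_or_ne φ θ with rfl | hne
  · simp [mBall, sub_self, abs_zero, sub_zero, add_zero, Ioo_self]
  obtain ⟨hθ0, hθπ⟩ := hθ
  obtain ⟨hφ0, hφπ⟩ := hφ
  set r := |φ - θ| with hr'
  have hr : 0 < r := abs_pos.mpr (sub_ne_zero.mpr hne)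
  have hrπ : r ≤ π := by
    rcases abs_cases (φ - θ) with ⟨h, _⟩ | ⟨h, _⟩ <;> rw [hr', h] <;> linarith
  have hθr_pos : 0 < θ + r := by linarith
  have hθr_pos' : 0 < (π - θ) + r := by linarith
  have hc1 : 1/2 * (θ + r) ≤ θ + φ ∧ θ + φ ≤ 2 * (θ + r) := by
    rcases abs_cases (φ - θ) with ⟨h, h'⟩ | ⟨h, h'⟩ <;> rw [hr', h] <;>
      constructor <;> linarith
  have hc2' : 1/2 * ((π - θ) + r) ≤ 2 * π - θ - φ ∧ 2 * π - θ - φ ≤ 2 * ((π - θ) + r) := by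
    rcases abs_cases (φ - θ) with ⟨h, h'⟩ | ⟨h, h'⟩ <;> rw [hr', h] <;>
      constructor <;> linarith
  have hcp := rpow_between (e := 2*α+1) (by norm_num : (0:ℝ) < 1/2) hθr_pos hc1.1 hc1.2
  have hcq := rpow_between (e := 2*β+1) (by norm_num : (0:ℝ) < 1/2) hθr_pos' hc2'.1 hc2'.2
  rw [← hma, ← hMa] at hcp
  rw [← hmb', ← hMb] at hcq
  have hTnn : 0 ≤ Tval (2*α+1) (2*β+1) θ r := by
    rw [Tval]
    exact mul_nonneg (mul_nonneg hr.le (Real.rpow_nonneg hθr_pos.le _))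
      (Real.rpow_nonneg hθr_pos'.le _)
  have hrp_nn : 0 ≤ (θ + r) ^ (2*α+1) := Real.rpow_nonneg hθr_pos.le _
  have hrq_nn : 0 ≤ ((π - θ) + r) ^ (2*β+1) := Real.rpow_nonneg hθr_pos'.le _
  have hS_ge : ma * mb * Tval (2*α+1) (2*β+1) θ r
      ≤ r * (θ + φ) ^ (2*α+1) * (2 * π - θ - φ) ^ (2*β+1) := by
    calc ma * mb * Tval (2*α+1) (2*β+1) θ r
        = (r * (ma * (θ + r) ^ (2*α+1))) * (mb * ((π - θ) + r) ^ (2*β+1)) := by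
          rw [Tval]; ring
      _ ≤ (r * (θ + φ) ^ (2*α+1)) * (2 * π - θ - φ) ^ (2*β+1) := by
          refine mul_le_mul ?_ hcq.1 (by positivity) ?_
          · exact mul_le_mul_of_nonneg_left hcp.1 hr.le
          · exact mul_nonneg hr.le (Real.rpow_nonneg (by linarith) _)
  have hS_le : r * (θ + φ) ^ (2*α+1) * (2 * π - θ - φ) ^ (2*β+1)
      ≤ Ma * Mb * Tval (2*α+1) (2*β+1) θ r := by
    calc r * (θ + φ) ^ (2*α+1) * (2 * π - θ - φ) ^ (2*β+1)
        ≤ (r * (Ma * (θ + r) ^ (2*α+1))) * (Mb * ((π - θ) + r) ^ (2*β+1)) := by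
          refine mul_le_mul ?_ hcq.2 (Real.rpow_nonneg (by linarith) _) ?_
          · exact mul_le_mul_of_nonneg_left hcp.2 hr.le
          · positivity
      _ = Ma * Mb * Tval (2*α+1) (2*β+1) θ r := by rw [Tval]; ring
  obtain ⟨hl2, hu2⟩ := h2b θ r ⟨hθ0, hθπ⟩ hr hrπ
  obtain ⟨hlm, hum⟩ := hmb θ r ⟨hθ0, hθπ⟩ hr
  constructor
  · calc k * c2 / (Ma * Mb) * (r * (θ + φ) ^ (2*α+1) * (2 * π - θ - φ) ^ (2*β+1))
        ≤ k * c2 / (Ma * Mb) * (Ma * Mb * Tval (2*α+1) (2*β+1) θ r) :=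
          mul_le_mul_of_nonneg_left hS_le (by positivity)
      _ = k * (c2 * Tval (2*α+1) (2*β+1) θ r) := by field_simp
      _ ≤ k * Nint (2*α+1) (2*β+1) θ r := mul_le_mul_of_nonneg_left hl2 hk.le
      _ ≤ mBall α β θ r := hlm
  · calc mBall α β θ r ≤ K * Nint (2*α+1) (2*β+1) θ r := hum
      _ ≤ K * (C2 * Tval (2*α+1) (2*β+1) θ r) := mul_le_mul_of_nonneg_left hu2 hK.le
      _ = K * C2 / (ma * mb) * (ma * mb * Tval (2*α+1) (2*β+1) θ r) := by field_simp
      _ ≤ K * C2 / (ma * mb) * (r * (θ + φ) ^ (2*α+1) * (2 * π - θ - φ) ^ (2*β+1)) :=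
          mul_le_mul_of_nonneg_left hS_ge (by positivity)
      _ ≤ max (k * c2 / (Ma * Mb)) (K * C2 / (ma * mb))
            * (r * (θ + φ) ^ (2*α+1) * (2 * π - θ - φ) ^ (2*β+1)) := by
          refine mul_le_mul_of_nonneg_right (le_max_right _ _) ?_
          exact mul_nonneg (mul_nonneg hr.le (Real.rpow_nonneg (by linarith) _))
            (Real.rpow_nonneg (by linarith) _)
end

section
/- Let γ ≥ -1/2 and λ > 0 be fixed. There exists a constant C = C(γ,λ) such that for all real numbers A > B > 0 one has ∫_{[-1,1]} (A - B s)^{-(γ + 1/2 + λ)} dΠ_γ(s) ≤ C · A^{-(γ+1/2)} (A-B)^{-λ}. -/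
open Real MeasureTheory Set
open scoped ENNReal

set_option maxHeartbeats 1000000

open intervalIntegral


lemma aux_rpow_anti {x y e : ℝ} (hx : 0 < x) (hxy : x ≤ y) (he : 0 ≤ e) :
    y ^ (-e) ≤ x ^ (-e) :=
  Real.rpow_le_rpow_of_nonpos hx hxy (neg_nonpos.mpr he)

lemma aux_bound_pow {p x : ℝ} (h1 : 1 ≤ x) (h2 : x ≤ 2) : x ^ p ≤ max 1 (2 ^ p) := by
  rcases le_or_gt 0 p with hp | hp
  · exact le_max_of_le_right (Real.rpow_le_rpow (by linarith) h2 hp)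
  · exact le_max_of_le_left (Real.rpow_le_one_of_one_le_of_nonpos h1 hp.le)

lemma aux_int_Ioc {p : ℝ} (hp : -1 < p) {a : ℝ} (ha : 0 ≤ a) :
    ∫ t in Ioc (0:ℝ) a, t ^ p = a ^ (p+1) / (p+1) := by
  rw [← intervalIntegral.integral_of_le ha, integral_rpow (Or.inl hp),
    Real.zero_rpow (by linarith), sub_zero]

lemma key_int {c lam s b : ℝ} (hc : 0 < c) (hlam : 0 < lam) (hs : 0 < s) (hsb : s ≤ b) :
    ∫ t in Ioc (0:ℝ) 1, t ^ (c-1) * (s + b*t) ^ (-(c+lam))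
      ≤ (1/c + 1/lam) * (b ^ (-c) * s ^ (-lam)) := by
  have hb : 0 < b := lt_of_lt_of_le hs hsb
  set t1 : ℝ := s / b with ht1def
  have ht1 : 0 < t1 := div_pos hs hb
  have ht1le : t1 ≤ 1 := (div_le_one hb).mpr hsb
  have hκ : 0 < c + lam := by linarith
  set f : ℝ → ℝ := fun t => t ^ (c-1) * (s + b*t) ^ (-(c+lam)) with hfdef
  have hfmeas : Measurable f := by fun_prop
  have hrpow_int : ∀ x : ℝ, 0 ≤ x → IntegrableOn (fun t : ℝ => t ^ (c-1)) (Ioc 0 x) := by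
    intro x hx
    rw [← intervalIntegrable_iff_integrableOn_Ioc_of_le hx]
    exact intervalIntegral.intervalIntegrable_rpow' (by linarith)
  have hg1 : IntegrableOn (fun t : ℝ => s ^ (-(c+lam)) * t ^ (c-1)) (Ioc 0 1) :=
    (hrpow_int 1 zero_le_one).const_mul _
  -- pointwise bound f ≤ g1 on Ioc 0 τ for τ ≤ 1
  have hptw1 : ∀ t : ℝ, 0 < t → f t ≤ s ^ (-(c+lam)) * t ^ (c-1) := by
    intro t ht0
    have h1 : (0:ℝ) < s + b*t := by nlinarith
    have h2 : (s + b*t) ^ (-(c+lam)) ≤ s ^ (-(c+lam)) :=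
      aux_rpow_anti hs (by nlinarith) hκ.le
    calc t ^ (c-1) * (s + b*t) ^ (-(c+lam)) ≤ t ^ (c-1) * s ^ (-(c+lam)) :=
          mul_le_mul_of_nonneg_left h2 (Real.rpow_nonneg ht0.le _)
      _ = s ^ (-(c+lam)) * t ^ (c-1) := mul_comm _ _
  have hf_nonneg : ∀ t : ℝ, 0 < t → 0 ≤ f t := fun t ht =>
    mul_nonneg (Real.rpow_nonneg ht.le _) (Real.rpow_nonneg (by nlinarith) _)
  have hf_int : IntegrableOn f (Ioc 0 1) := by
    apply Integrable.mono' hg1 hfmeas.aestronglyMeasurable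
    filter_upwards [ae_restrict_mem measurableSet_Ioc] with t ht
    rw [Real.norm_eq_abs, abs_of_nonneg (hf_nonneg t ht.1)]
    exact hptw1 t ht.1
  have hsplit : Ioc (0:ℝ) 1 = Ioc 0 t1 ∪ Ioc t1 1 := (Ioc_union_Ioc_eq_Ioc ht1.le ht1le).symm
  have hsub1 : Ioc (0:ℝ) t1 ⊆ Ioc 0 1 := Ioc_subset_Ioc_right ht1le
  have hsub2 : Ioc t1 1 ⊆ Ioc (0:ℝ) 1 := Ioc_subset_Ioc_left ht1.le
  rw [hsplit, setIntegral_union (Set.Ioc_disjoint_Ioc_of_le le_rfl) measurableSet_Ioc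
    (hf_int.mono_set hsub1) (hf_int.mono_set hsub2)]
  -- piece 1
  have hp1 : ∫ t in Ioc (0:ℝ) t1, f t ≤ s ^ (-(c+lam)) * (t1 ^ c / c) := by
    calc ∫ t in Ioc (0:ℝ) t1, f t ≤ ∫ t in Ioc (0:ℝ) t1, s ^ (-(c+lam)) * t ^ (c-1) :=
          setIntegral_mono_on (hf_int.mono_set hsub1) (hrpow_int t1 ht1.le |>.const_mul _)
            measurableSet_Ioc (fun t ht => hptw1 t ht.1)
      _ = s ^ (-(c+lam)) * ∫ t in Ioc (0:ℝ) t1, t ^ (c-1) := integral_const_mul _ _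
      _ = s ^ (-(c+lam)) * (t1 ^ c / c) := by
          rw [aux_int_Ioc (by linarith) ht1.le]
          norm_num
  -- piece 2
  have h0uIcc : (0:ℝ) ∉ Set.uIcc t1 1 := notMem_uIcc_of_lt ht1 zero_lt_one
  have hg2 : IntegrableOn (fun t : ℝ => b ^ (-(c+lam)) * t ^ (-1-lam)) (Ioc t1 1) := by
    rw [← intervalIntegrable_iff_integrableOn_Ioc_of_le ht1le]
    exact (intervalIntegral.intervalIntegrable_rpow (Or.inr h0uIcc)).const_mul _
  have hp2 : ∫ t in Ioc t1 1, f t ≤ b ^ (-(c+lam)) * (t1 ^ (-lam) / lam) := by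
    have hptw2 : ∀ t ∈ Ioc t1 1, f t ≤ b ^ (-(c+lam)) * t ^ (-1-lam) := by
      intro t ht
      have ht0 : 0 < t := lt_trans ht1 ht.1
      have h1 : (s + b*t) ^ (-(c+lam)) ≤ (b*t) ^ (-(c+lam)) :=
        aux_rpow_anti (by positivity) (by nlinarith) hκ.le
      have h2 : (b*t) ^ (-(c+lam)) = b ^ (-(c+lam)) * t ^ (-(c+lam)) :=
        Real.mul_rpow hb.le ht0.le
      calc f t ≤ t ^ (c-1) * (b*t) ^ (-(c+lam)) :=
            mul_le_mul_of_nonneg_left h1 (Real.rpow_nonneg ht0.le _)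
        _ = b ^ (-(c+lam)) * (t ^ (c-1) * t ^ (-(c+lam))) := by rw [h2]; ring
        _ = b ^ (-(c+lam)) * t ^ (-1-lam) := by
            rw [← Real.rpow_add ht0]
            ring_nf
    calc ∫ t in Ioc t1 1, f t ≤ ∫ t in Ioc t1 1, b ^ (-(c+lam)) * t ^ (-1-lam) :=
          setIntegral_mono_on (hf_int.mono_set hsub2) hg2 measurableSet_Ioc hptw2
      _ = b ^ (-(c+lam)) * ∫ t in Ioc t1 1, t ^ (-1-lam) := integral_const_mul _ _
      _ ≤ b ^ (-(c+lam)) * (t1 ^ (-lam) / lam) := by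
          apply mul_le_mul_of_nonneg_left _ (Real.rpow_nonneg hb.le _)
          have hr1 : (-1-lam : ℝ) ≠ -1 := by intro h; linarith [congrArg (fun x => x + 1) h]
          rw [← intervalIntegral.integral_of_le ht1le, integral_rpow (Or.inr ⟨hr1, h0uIcc⟩)]
          have he : (-1-lam+1) = -lam := by ring
          rw [he, Real.one_rpow]
          have h3 : 0 < t1 ^ (-lam) := Real.rpow_pos_of_pos ht1 _
          have hq : (1 - t1 ^ (-lam))/(-lam) = (t1 ^ (-lam) - 1)/lam := by
            rw [div_neg]; ring_nf
          rw [hq]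
          gcongr
          linarith
  -- combine
  have e1 : s ^ (-(c+lam)) * t1 ^ c = b ^ (-c) * s ^ (-lam) := by
    rw [ht1def, Real.div_rpow hs.le hb.le, div_eq_mul_inv, ← Real.rpow_neg hb.le,
      ← mul_assoc, ← Real.rpow_add hs, show -(c+lam)+c = -lam by ring]
    ring
  have e2 : b ^ (-(c+lam)) * t1 ^ (-lam) = b ^ (-c) * s ^ (-lam) := by
    have : t1 ^ (-lam) = s ^ (-lam) * b ^ lam := by
      rw [ht1def, Real.div_rpow hs.le hb.le, div_eq_mul_inv, ← Real.rpow_neg hb.le, neg_neg]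
    rw [this, show b ^ (-(c+lam)) * (s ^ (-lam) * b ^ lam)
        = (b ^ (-(c+lam)) * b ^ lam) * s ^ (-lam) by ring, ← Real.rpow_add hb,
      show -(c+lam)+lam = -c by ring]
  calc _ ≤ s ^ (-(c+lam)) * (t1 ^ c / c) + b ^ (-(c+lam)) * (t1 ^ (-lam) / lam) :=
        add_le_add hp1 hp2
    _ = (1/c + 1/lam) * (b ^ (-c) * s ^ (-lam)) := by
        have h1 : s ^ (-(c+lam)) * (t1 ^ c / c) = (b ^ (-c) * s ^ (-lam))/c := by
          rw [← e1]; ring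
        have h2 : b ^ (-(c+lam)) * (t1 ^ (-lam) / lam) = (b ^ (-c) * s ^ (-lam))/lam := by
          rw [← e2]; ring
        rw [h1, h2]
        field_simp

lemma dens_integrable {p : ℝ} (hp : -1 < p) :
    IntegrableOn (fun u : ℝ => (1 - u^2) ^ p) (Icc (-1:ℝ) 1) := by
  have hm : Measurable (fun u : ℝ => (1 - u^2) ^ p) := by fun_prop
  have h1 : IntervalIntegrable (fun x : ℝ => x ^ p) volume 0 1 :=
    intervalIntegral.intervalIntegrable_rpow' hp
  have hR : IntegrableOn (fun u : ℝ => (1-u) ^ p) (Ioc 0 1) := by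
    have h2 := (h1.comp_sub_left 1).symm
    norm_num at h2
    rwa [intervalIntegrable_iff_integrableOn_Ioc_of_le zero_le_one] at h2
  have hL : IntegrableOn (fun u : ℝ => (u+1) ^ p) (Ioc (-1:ℝ) 0) := by
    have h2 := h1.comp_add_right 1
    norm_num at h2
    rwa [intervalIntegrable_iff_integrableOn_Ioc_of_le (by norm_num)] at h2
  have hsplit : Icc (-1:ℝ) 1 = Icc (-1) 0 ∪ Ioc 0 1 :=
    (Icc_union_Ioc_eq_Icc (by norm_num) zero_le_one).symm
  rw [hsplit]
  apply IntegrableOn.union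
  · rw [integrableOn_Icc_iff_integrableOn_Ioc]
    apply Integrable.mono' (hL.const_mul (max 1 (2 ^ p))) hm.aestronglyMeasurable
    filter_upwards [ae_restrict_mem measurableSet_Ioc] with u hu
    have hu1 : (0:ℝ) < u + 1 := by linarith [hu.1]
    have hu2 : (0:ℝ) ≤ 1 - u := by linarith [hu.2]
    have he : (1 - u^2 : ℝ) = (u+1) * (1-u) := by ring
    rw [Real.norm_eq_abs, he, Real.mul_rpow hu1.le hu2,
      abs_of_nonneg (mul_nonneg (Real.rpow_nonneg hu1.le _) (Real.rpow_nonneg hu2 _))]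
    calc (u+1) ^ p * (1-u) ^ p ≤ (u+1) ^ p * max 1 (2 ^ p) :=
          mul_le_mul_of_nonneg_left
            (aux_bound_pow (by linarith [hu.2]) (by linarith [hu.1])) (Real.rpow_nonneg hu1.le _)
      _ = max 1 (2 ^ p) * (u+1) ^ p := mul_comm _ _
  · apply Integrable.mono' (hR.const_mul (max 1 (2 ^ p))) hm.aestronglyMeasurable
    filter_upwards [ae_restrict_mem measurableSet_Ioc] with u hu
    have hu1 : (0:ℝ) ≤ 1 - u := by linarith [hu.2]
    have hu2 : (1:ℝ) ≤ 1 + u := by linarith [hu.1]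
    have he : (1 - u^2 : ℝ) = (1-u) * (1+u) := by ring
    rw [Real.norm_eq_abs, he, Real.mul_rpow hu1 (by linarith),
      abs_of_nonneg (mul_nonneg (Real.rpow_nonneg hu1 _) (Real.rpow_nonneg (by linarith) _))]
    calc (1-u) ^ p * (1+u) ^ p ≤ (1-u) ^ p * max 1 (2 ^ p) :=
          mul_le_mul_of_nonneg_left
            (aux_bound_pow hu2 (by linarith [hu.2])) (Real.rpow_nonneg hu1 _)
      _ = max 1 (2 ^ p) * (1-u) ^ p := mul_comm _ _

lemma key_int_integrable {c lam s b : ℝ} (hc : 0 < c) (hκ : 0 < c + lam) (hs : 0 < s)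
    (hb : 0 < b) :
    IntegrableOn (fun t : ℝ => t ^ (c-1) * (s + b*t) ^ (-(c+lam))) (Ioc (0:ℝ) 1) := by
  have hg0 : IntegrableOn (fun t : ℝ => t ^ (c-1)) (Ioc (0:ℝ) 1) := by
    rw [← intervalIntegrable_iff_integrableOn_Ioc_of_le zero_le_one]
    exact intervalIntegral.intervalIntegrable_rpow' (by linarith)
  have hg1 : IntegrableOn (fun t : ℝ => s ^ (-(c+lam)) * t ^ (c-1)) (Ioc 0 1) :=
    hg0.const_mul _
  have hme : Measurable (fun t : ℝ => t ^ (c-1) * (s + b*t) ^ (-(c+lam))) := by fun_prop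
  apply Integrable.mono' hg1 hme.aestronglyMeasurable
  filter_upwards [ae_restrict_mem measurableSet_Ioc] with t ht
  have ht0 : 0 < t := ht.1
  have h1 : (0:ℝ) < s + b*t := by nlinarith
  rw [Real.norm_eq_abs,
    abs_of_nonneg (mul_nonneg (Real.rpow_nonneg ht0.le _) (Real.rpow_nonneg h1.le _))]
  calc t ^ (c-1) * (s + b*t) ^ (-(c+lam)) ≤ t ^ (c-1) * s ^ (-(c+lam)) :=
        mul_le_mul_of_nonneg_left (aux_rpow_anti hs (by nlinarith) hκ.le)
          (Real.rpow_nonneg ht0.le _)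
    _ = s ^ (-(c+lam)) * t ^ (c-1) := mul_comm _ _

lemma key_est (c lam Cst : ℝ) (hc : 0 < c) (hlam : 0 < lam) (hCst : 0 ≤ Cst) :
    ∃ C : ℝ, 0 < C ∧ ∀ A B : ℝ, 0 < B → B < A →
      (∫ u in Icc (-1:ℝ) 1, Cst * (1 - u^2) ^ (c-1) * (A - B*u) ^ (-(c+lam)))
        ≤ C * (A ^ (-c) * (A-B) ^ (-lam)) := by
  have hκ : 0 < c + lam := by linarith
  have h2c : (0:ℝ) < 2 ^ c := by positivity
  set D : ℝ → ℝ := fun u => Cst * (1 - u^2) ^ (c-1) with hDdef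
  have hDnn : ∀ u ∈ Icc (-1:ℝ) 1, 0 ≤ D u := by
    intro u hu
    have : (0:ℝ) ≤ 1 - u^2 := by nlinarith [hu.1, hu.2]
    exact mul_nonneg hCst (Real.rpow_nonneg this _)
  have hDint : IntegrableOn D (Icc (-1:ℝ) 1) :=
    (dens_integrable (by linarith)).const_mul Cst
  set M : ℝ := ∫ u in Icc (-1:ℝ) 1, D u with hMdef
  have hM0 : 0 ≤ M := setIntegral_nonneg measurableSet_Icc hDnn
  set M1 : ℝ := ∫ u in Icc (-1:ℝ) 0, D u with hM1def
  have hM10 : 0 ≤ M1 := setIntegral_nonneg measurableSet_Icc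
    (fun u hu => hDnn u ⟨hu.1, le_trans hu.2 zero_le_one⟩)
  set M2 : ℝ := max 1 ((2:ℝ) ^ (c-1)) with hM2def
  have hM2 : 0 < M2 := lt_of_lt_of_le one_pos (le_max_left _ _)
  have hsum : (0:ℝ) < 1/c + 1/lam := by positivity
  have hterm0 : (0:ℝ) ≤ M * 2^c := mul_nonneg hM0 h2c.le
  have hterm1 : (0:ℝ) ≤ Cst * M2 * (1/c + 1/lam) * 2^c :=
    mul_nonneg (mul_nonneg (mul_nonneg hCst hM2.le) hsum.le) h2c.le
  refine ⟨M * 2^c + (M1 + Cst * M2 * (1/c + 1/lam) * 2^c) + 1, by linarith, ?_⟩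
  intro A B hB hBA
  have hA : 0 < A := hB.trans hBA
  have hs : 0 < A - B := by linarith
  have hR : 0 < A ^ (-c) * (A-B) ^ (-lam) := by positivity
  have hhalf : (A/2:ℝ) ^ (-c) = 2^c * A ^ (-c) := by
    rw [Real.div_rpow hA.le (by norm_num : (0:ℝ) ≤ 2),
      Real.rpow_neg (by norm_num : (0:ℝ) ≤ 2), div_eq_mul_inv, inv_inv, mul_comm]
  -- pointwise lower bounds on A - B*u
  have hlow : ∀ u ∈ Icc (-1:ℝ) 1, A - B ≤ A - B*u := by
    intro u hu
    nlinarith [mul_le_mul_of_nonneg_left hu.2 hB.le]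
  have hpos : ∀ u ∈ Icc (-1:ℝ) 1, 0 < A - B*u := fun u hu => lt_of_lt_of_le hs (hlow u hu)
  -- integrability of the full integrand
  set F : ℝ → ℝ := fun u => Cst * (1 - u^2) ^ (c-1) * (A - B*u) ^ (-(c+lam)) with hFdef
  have hFnn : ∀ u ∈ Icc (-1:ℝ) 1, 0 ≤ F u := fun u hu =>
    mul_nonneg (hDnn u hu) (Real.rpow_nonneg (hpos u hu).le _)
  have hFme : Measurable F := by fun_prop
  have hFint : IntegrableOn F (Icc (-1:ℝ) 1) := by
    apply Integrable.mono' (hDint.mul_const ((A-B) ^ (-(c+lam)))) hFme.aestronglyMeasurable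
    filter_upwards [ae_restrict_mem measurableSet_Icc] with u hu
    rw [Real.norm_eq_abs, abs_of_nonneg (hFnn u hu)]
    exact mul_le_mul_of_nonneg_left (aux_rpow_anti hs (hlow u hu) hκ.le) (hDnn u hu)
  rcases le_or_gt B (A/2) with hcase | hcase
  · -- B small : A - B*u ≥ A/2 everywhere
    have hbd : ∀ u ∈ Icc (-1:ℝ) 1, F u ≤ D u * (2^c * (A ^ (-c) * (A-B) ^ (-lam))) := by
      intro u hu
      have h2 : A/2 ≤ A - B*u := le_trans (by linarith) (hlow u hu)
      have : (A - B*u) ^ (-(c+lam)) ≤ 2^c * (A ^ (-c) * (A-B) ^ (-lam)) := by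
        rw [show -(c+lam) = -c + -lam by ring, Real.rpow_add (hpos u hu)]
        calc (A-B*u) ^ (-c) * (A-B*u) ^ (-lam)
            ≤ (A/2) ^ (-c) * (A-B) ^ (-lam) :=
              mul_le_mul (aux_rpow_anti (by positivity) h2 hc.le)
                (aux_rpow_anti hs (hlow u hu) hlam.le)
                (Real.rpow_nonneg (hpos u hu).le _) (Real.rpow_nonneg (by positivity) _)
          _ = 2^c * (A ^ (-c) * (A-B) ^ (-lam)) := by rw [hhalf]; ring
      exact mul_le_mul_of_nonneg_left this (hDnn u hu)
    calc ∫ u in Icc (-1:ℝ) 1, F u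
        ≤ ∫ u in Icc (-1:ℝ) 1, D u * (2^c * (A ^ (-c) * (A-B) ^ (-lam))) :=
          setIntegral_mono_on hFint (hDint.mul_const _) measurableSet_Icc hbd
      _ = M * 2^c * (A ^ (-c) * (A-B) ^ (-lam)) := by rw [MeasureTheory.integral_mul_const]; ring
      _ ≤ _ := mul_le_mul_of_nonneg_right (by linarith) hR.le
  · -- B large : split at 0
    have hsb : A - B ≤ A/2 := by linarith
    have hA2 : (0:ℝ) < A/2 := by positivity
    have hsplit : Icc (-1:ℝ) 1 = Icc (-1:ℝ) 0 ∪ Ioc 0 1 :=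
      (Icc_union_Ioc_eq_Icc (by norm_num) zero_le_one).symm
    have hdisj : Disjoint (Icc (-1:ℝ) 0) (Ioc (0:ℝ) 1) := by
      rw [Set.disjoint_left]
      rintro u ⟨_, h1⟩ ⟨h2, _⟩
      linarith
    have hsubL : Icc (-1:ℝ) 0 ⊆ Icc (-1:ℝ) 1 := Icc_subset_Icc_right zero_le_one
    have hsubR : Ioc (0:ℝ) 1 ⊆ Icc (-1:ℝ) 1 := fun u hu => ⟨by linarith [hu.1], hu.2⟩
    rw [hsplit, setIntegral_union hdisj measurableSet_Ioc (hFint.mono_set hsubL)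
      (hFint.mono_set hsubR)]
    -- left piece
    have hleft : ∫ u in Icc (-1:ℝ) 0, F u ≤ M1 * (A ^ (-c) * (A-B) ^ (-lam)) := by
      have hbd : ∀ u ∈ Icc (-1:ℝ) 0, F u ≤ D u * (A ^ (-c) * (A-B) ^ (-lam)) := by
        intro u hu
        have hu' : u ∈ Icc (-1:ℝ) 1 := hsubL hu
        have h2 : A ≤ A - B*u := by nlinarith [mul_nonpos_of_nonneg_of_nonpos hB.le hu.2]
        have : (A - B*u) ^ (-(c+lam)) ≤ A ^ (-c) * (A-B) ^ (-lam) := by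
          rw [show -(c+lam) = -c + -lam by ring, Real.rpow_add (hpos u hu')]
          exact mul_le_mul (aux_rpow_anti hA h2 hc.le)
            (aux_rpow_anti hs (hlow u hu') hlam.le)
            (Real.rpow_nonneg (hpos u hu').le _) (Real.rpow_nonneg hA.le _)
        exact mul_le_mul_of_nonneg_left this (hDnn u hu')
      calc ∫ u in Icc (-1:ℝ) 0, F u
          ≤ ∫ u in Icc (-1:ℝ) 0, D u * (A ^ (-c) * (A-B) ^ (-lam)) :=
            setIntegral_mono_on (hFint.mono_set hsubL)
              ((hDint.mono_set hsubL).mul_const _) measurableSet_Icc hbd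
        _ = M1 * (A ^ (-c) * (A-B) ^ (-lam)) := integral_mul_const _ _
    -- right piece
    have hGint : IntegrableOn
        (fun u : ℝ => (1-u) ^ (c-1) * ((A-B) + (A/2)*(1-u)) ^ (-(c+lam))) (Ioc (0:ℝ) 1) := by
      have h0 := key_int_integrable hc hκ hs hA2
      have h1 : IntervalIntegrable
          (fun t : ℝ => t ^ (c-1) * ((A-B) + (A/2)*t) ^ (-(c+lam))) volume 0 1 :=
        (intervalIntegrable_iff_integrableOn_Ioc_of_le zero_le_one).mpr h0
      have h2 := h1.comp_sub_left 1
      simp only [sub_zero, sub_self] at h2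
      rw [← intervalIntegrable_iff_integrableOn_Ioc_of_le zero_le_one]
      exact h2.symm
    have hright : ∫ u in Ioc (0:ℝ) 1, F u
        ≤ Cst * M2 * ((1/c + 1/lam) * (2^c * (A ^ (-c) * (A-B) ^ (-lam)))) := by
      have hbd : ∀ u ∈ Ioc (0:ℝ) 1, F u
          ≤ Cst * M2 * ((1-u) ^ (c-1) * ((A-B) + (A/2)*(1-u)) ^ (-(c+lam))) := by
        intro u hu
        have hu' : u ∈ Icc (-1:ℝ) 1 := hsubR hu
        have h1u : (0:ℝ) ≤ 1 - u := by linarith [hu.2]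
        have h1u' : (0:ℝ) ≤ 1 + u := by linarith [hu.1]
        have hq : (0:ℝ) < (A-B) + (A/2)*(1-u) := by nlinarith
        have hq2 : (A-B) + (A/2)*(1-u) ≤ A - B*u := by
          have := mul_le_mul_of_nonneg_right hcase.le h1u
          nlinarith
        have he1 : (1 - u^2 : ℝ) ^ (c-1) = (1-u) ^ (c-1) * (1+u) ^ (c-1) := by
          rw [show (1 - u^2 : ℝ) = (1-u)*(1+u) by ring, Real.mul_rpow h1u h1u']
        have he2 : (1+u) ^ (c-1) ≤ M2 := aux_bound_pow (by linarith [hu.1]) (by linarith [hu.2])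
        calc F u = Cst * ((1-u) ^ (c-1) * (1+u) ^ (c-1)) * (A - B*u) ^ (-(c+lam)) := by
              rw [hFdef]; dsimp only; rw [he1]
          _ ≤ Cst * ((1-u) ^ (c-1) * M2) * ((A-B) + (A/2)*(1-u)) ^ (-(c+lam)) := by
              apply mul_le_mul
              · exact mul_le_mul_of_nonneg_left
                  (mul_le_mul_of_nonneg_left he2 (Real.rpow_nonneg h1u _)) hCst
              · exact aux_rpow_anti hq hq2 hκ.le
              · exact Real.rpow_nonneg (hpos u hu').le _
              · exact mul_nonneg hCst (mul_nonneg (Real.rpow_nonneg h1u _) hM2.le)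
          _ = Cst * M2 * ((1-u) ^ (c-1) * ((A-B) + (A/2)*(1-u)) ^ (-(c+lam))) := by ring
      have hsubst : ∫ u in Ioc (0:ℝ) 1, (1-u) ^ (c-1) * ((A-B) + (A/2)*(1-u)) ^ (-(c+lam))
          = ∫ t in Ioc (0:ℝ) 1, t ^ (c-1) * ((A-B) + (A/2)*t) ^ (-(c+lam)) := by
        rw [← intervalIntegral.integral_of_le zero_le_one,
          ← intervalIntegral.integral_of_le zero_le_one]
        have h3 := intervalIntegral.integral_comp_sub_left (a := (0:ℝ)) (b := 1)
          (fun t : ℝ => t ^ (c-1) * ((A-B) + (A/2)*t) ^ (-(c+lam))) 1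
        simp only [sub_zero, sub_self] at h3
        exact h3
      calc ∫ u in Ioc (0:ℝ) 1, F u
          ≤ ∫ u in Ioc (0:ℝ) 1,
              Cst * M2 * ((1-u) ^ (c-1) * ((A-B) + (A/2)*(1-u)) ^ (-(c+lam))) :=
            setIntegral_mono_on (hFint.mono_set hsubR) (hGint.const_mul _)
              measurableSet_Ioc hbd
        _ = Cst * M2 * ∫ u in Ioc (0:ℝ) 1,
              (1-u) ^ (c-1) * ((A-B) + (A/2)*(1-u)) ^ (-(c+lam)) := integral_const_mul _ _
        _ ≤ Cst * M2 * ((1/c + 1/lam) * ((A/2) ^ (-c) * (A-B) ^ (-lam))) := by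
            rw [hsubst]
            exact mul_le_mul_of_nonneg_left (key_int hc hlam hs hsb)
              (mul_nonneg hCst hM2.le)
        _ = Cst * M2 * ((1/c + 1/lam) * (2^c * (A ^ (-c) * (A-B) ^ (-lam)))) := by
            rw [hhalf]; ring
    refine le_trans (add_le_add hleft hright) ?_
    calc M1 * (A ^ (-c) * (A-B) ^ (-lam))
          + Cst * M2 * ((1/c + 1/lam) * (2^c * (A ^ (-c) * (A-B) ^ (-lam))))
        = (M1 + Cst * M2 * (1/c + 1/lam) * 2^c) * (A ^ (-c) * (A-B) ^ (-lam)) := by ring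
      _ ≤ _ := mul_le_mul_of_nonneg_right (by linarith) hR.le

theorem stmt12 (γ lam : ℝ) (hγ : -(1/2) ≤ γ) (hlam : 0 < lam) :
    ∃ C : ℝ, 0 < C ∧ ∀ A B : ℝ, 0 < B → B < A →
      (∫ s, (A - B * s) ^ (-(γ + 1/2 + lam)) ∂PiMeas γ)
        ≤ C * (A ^ (-(γ + 1/2)) * (A - B) ^ (-lam)) := by
  by_cases hgam : γ = -(1/2)
  · subst hgam
    refine ⟨1, one_pos, ?_⟩
    intro A B hB hBA
    have hs : 0 < A - B := by linarith
    have hexp : -(-(1/2) + 1/2 + lam) = -lam := by ring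
    rw [PiMeas, if_pos rfl]
    rw [MeasureTheory.integral_smul_measure]
    have hint : ∀ a : ℝ, Integrable (fun s : ℝ => (A - B * s) ^ (-(-(1/2) + 1/2 + lam)))
        (Measure.dirac a) := by
      intro a
      have hm : Measurable (fun s : ℝ => (A - B * s) ^ (-(-(1/2) + 1/2 + lam))) := by fun_prop
      apply Integrable.congr (integrable_const ((A - B * a) ^ (-(-(1/2) + 1/2 + lam))))
      rw [Filter.EventuallyEq, MeasureTheory.ae_dirac_eq]
      exact Filter.eventually_pure.mpr rfl
    rw [integral_add_measure (hint _) (hint _), integral_dirac, integral_dirac]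
    have h1 : (A - B * (-1)) ^ (-(-(1/2) + 1/2 + lam)) = (A + B) ^ (-lam) := by
      rw [hexp, show A - B * (-1) = A + B by ring]
    have h2 : (A - B * 1) ^ (-(-(1/2) + 1/2 + lam)) = (A - B) ^ (-lam) := by
      rw [hexp, show A - B * 1 = A - B by ring]
    rw [h1, h2]
    have h3 : (A + B) ^ (-lam) ≤ (A - B) ^ (-lam) := aux_rpow_anti hs (by linarith) hlam.le
    have h4 : ((2:ℝ≥0∞)⁻¹).toReal = 1/2 := by simp
    rw [h4, smul_eq_mul]
    have h5 : -(-(1/2) + 1/2) = (0:ℝ) := by ring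
    rw [h5, Real.rpow_zero, one_mul, one_mul]
    linarith
  · have hc : 0 < γ + 1/2 := by
      rcases lt_of_le_of_ne hγ (Ne.symm hgam) with h
      linarith
    set Cst : ℝ := Real.Gamma (γ + 1) / (Real.sqrt π * Real.Gamma (γ + 1/2)) with hCstdef
    have hCst : 0 ≤ Cst := by
      apply div_nonneg (Real.Gamma_pos_of_pos (by linarith)).le
      exact mul_nonneg (Real.sqrt_nonneg _) (Real.Gamma_pos_of_pos hc).le
    obtain ⟨C, hC, hbound⟩ := key_est (γ + 1/2) lam Cst hc hlam hCst
    refine ⟨C, hC, ?_⟩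
    intro A B hB hBA
    have hA : 0 < A := hB.trans hBA
    have hs : 0 < A - B := by linarith
    have htrans : (∫ s, (A - B * s) ^ (-(γ + 1/2 + lam)) ∂PiMeas γ)
        = ∫ u in Icc (-1:ℝ) 1,
            Cst * (1 - u^2) ^ (γ + 1/2 - 1) * (A - B*u) ^ (-(γ + 1/2 + lam)) := by
      rw [PiMeas, if_neg hgam]
      have hm0 : Measurable (fun u : ℝ => Cst * (1 - u ^ 2) ^ (γ - 1/2)) := by
        have : Measurable (fun u : ℝ => (1 - u ^ 2) ^ (γ - 1/2)) := by fun_prop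
        exact measurable_const.mul this
      have hm : Measurable (fun u : ℝ => Real.toNNReal (Cst * (1 - u ^ 2) ^ (γ - 1/2))) :=
        measurable_real_toNNReal.comp hm0
      simp only [ENNReal.ofReal]
      rw [integral_withDensity_eq_integral_smul hm]
      apply setIntegral_congr_fun measurableSet_Icc
      intro u hu
      have hnn : (0:ℝ) ≤ 1 - u^2 := by nlinarith [hu.1, hu.2]
      have hd : (0:ℝ) ≤ Cst * (1 - u ^ 2) ^ (γ - 1/2) :=
        mul_nonneg hCst (Real.rpow_nonneg hnn _)
      dsimp only
      rw [NNReal.smul_def, Real.coe_toNNReal _ hd,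
        show γ + 1/2 - 1 = γ - 1/2 by ring, smul_eq_mul]
    rw [htrans]
    exact hbound A B hB hBA
end

section
/- There exist absolute constants 0 < c ≤ C such that: (i) for all θ, θ̃, φ ∈ (0,π) with |θ-φ| > 2|θ-θ̃| and all u, v ∈ [-1,1], one has c · q(θ̃,φ,u,v) ≤ q(θ,φ,u,v) ≤ C · q(θ̃,φ,u,v); and (ii) for all θ, φ, φ̃ ∈ (0,π) with |θ-φ| > 2|φ-φ̃| and all u, v ∈ [-1,1], one has c · q(θ,φ̃,u,v) ≤ q(θ,φ,u,v) ≤ C · q(θ,φ̃,u,v). -/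
open Real MeasureTheory Set
open scoped ENNReal

lemma abs_sin_sub_sin' (a b : ℝ) : |Real.sin a - Real.sin b| ≤ |a - b| := by
  rw [Real.sin_sub_sin]
  have h1 : |Real.sin ((a - b) / 2)| ≤ |a - b| / 2 := by
    simpa [abs_div] using (Real.abs_sin_le_abs (x := (a - b) / 2))
  have h2 : |Real.cos ((a + b) / 2)| ≤ 1 := Real.abs_cos_le_one _
  rw [abs_mul, abs_mul]
  norm_num
  nlinarith [abs_nonneg (Real.sin ((a - b) / 2)), abs_nonneg (Real.cos ((a+b)/2))]

lemma abs_cos_sub_cos' (a b : ℝ) : |Real.cos a - Real.cos b| ≤ |a - b| := by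
  rw [Real.cos_sub_cos]
  have h1 : |Real.sin ((a - b) / 2)| ≤ |a - b| / 2 := by
    simpa [abs_div] using (Real.abs_sin_le_abs (x := (a - b) / 2))
  have h2 : |Real.sin ((a + b) / 2)| ≤ 1 := Real.abs_sin_le_one _
  rw [abs_mul, abs_mul]
  norm_num
  nlinarith [abs_nonneg (Real.sin ((a - b) / 2)), abs_nonneg (Real.sin ((a+b)/2))]

lemma qK_eq' (θ φ u v : ℝ) :
    qK θ φ u v = (1-u)*(Real.sin (θ/2)*Real.sin (φ/2)) + (1-v)*(Real.cos (θ/2)*Real.cos (φ/2))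
      + 2*(Real.sin ((θ-φ)/4))^2 := by
  have h1 : Real.cos (θ/2 - φ/2)
      = Real.cos (θ/2)*Real.cos (φ/2) + Real.sin (θ/2)*Real.sin (φ/2) := Real.cos_sub _ _
  have h2 : Real.cos (θ/2 - φ/2) = 1 - 2*Real.sin ((θ-φ)/4)^2 := by
    have h := Real.cos_two_mul ((θ-φ)/4)
    have h3 := Real.sin_sq_add_cos_sq ((θ-φ)/4)
    rw [show θ/2 - φ/2 = 2*((θ-φ)/4) by ring, h]; linarith
  unfold qK
  linear_combination h1 - h2

lemma jordan_lb {x : ℝ} (hx : |x| < π) (hπ : 3 < π) (hπ' : π < 3.15) :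
    |x|^2 ≤ 40 * Real.sin (x/4)^2 := by
  have hD0 : 0 ≤ |x| := abs_nonneg _
  have h4 : |x/4| = |x| / 4 := by rw [abs_div]; norm_num
  have hjord : 2/π * (|x|/4) ≤ |Real.sin (x/4)| := by
    rw [← h4]
    apply Real.mul_abs_le_abs_sin
    rw [h4]; linarith
  have hsq : (2/π * (|x|/4))^2 ≤ |Real.sin (x/4)|^2 :=
    pow_le_pow_left₀ (by positivity) hjord 2
  rw [sq_abs] at hsq
  have hπpos : (0:ℝ) < π := by linarith
  have heq : (2/π * (|x|/4))^2 = |x|^2 / (4 * π^2) := by rw [mul_pow, div_pow, div_pow]; field_simp; ring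
  rw [heq, div_le_iff₀ (by positivity)] at hsq
  have hπ2 : π^2 ≤ 10 := by nlinarith
  nlinarith [hsq, mul_nonneg (sq_nonneg (Real.sin (x/4))) (show (0:ℝ) ≤ 10 - π^2 by linarith)]

set_option maxHeartbeats 1000000 in
lemma qK_key {θ θt φ u v : ℝ} (hθ : θ ∈ Ioo 0 π) (hθt : θt ∈ Ioo 0 π) (hφ : φ ∈ Ioo 0 π)
    (hu : u ∈ Icc (-1:ℝ) 1) (hv : v ∈ Icc (-1:ℝ) 1)
    (h1 : |θ - θt| ≤ |θt - φ|) (h2 : |θ - φ| ≤ 2 * |θt - φ|) :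
    qK θ φ u v ≤ 200 * qK θt φ u v := by
  obtain ⟨hθ0, hθπ⟩ := hθ
  obtain ⟨ht0, htπ⟩ := hθt
  obtain ⟨hφ0, hφπ⟩ := hφ
  obtain ⟨hu1, hu2⟩ := hu
  obtain ⟨hv1, hv2⟩ := hv
  have hπ := Real.pi_gt_three
  have hπ' := Real.pi_lt_d2
  set Dt := |θt - φ| with hDt_def
  have hDt0 : 0 ≤ Dt := abs_nonneg _
  have hDtπ : Dt < π := by
    rw [hDt_def, abs_sub_lt_iff]; constructor <;> linarith
  set s := Real.sin (θ/2) with hs_def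
  set st := Real.sin (θt/2) with hst_def
  set sp := Real.sin (φ/2) with hsp_def
  set c := Real.cos (θ/2) with hc_def
  set ct := Real.cos (θt/2) with hct_def
  set cp := Real.cos (φ/2) with hcp_def
  set T := Real.sin ((θ-φ)/4)^2 with hT_def
  set Tt := Real.sin ((θt-φ)/4)^2 with hTt_def
  have hs : 0 ≤ s := Real.sin_nonneg_of_nonneg_of_le_pi (by linarith) (by linarith)
  have hst : 0 ≤ st := Real.sin_nonneg_of_nonneg_of_le_pi (by linarith) (by linarith)
  have hsp : 0 ≤ sp := Real.sin_nonneg_of_nonneg_of_le_pi (by linarith) (by linarith)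
  have hc : 0 ≤ c := Real.cos_nonneg_of_mem_Icc ⟨by linarith, by linarith⟩
  have hct : 0 ≤ ct := Real.cos_nonneg_of_mem_Icc ⟨by linarith, by linarith⟩
  have hcp : 0 ≤ cp := Real.cos_nonneg_of_mem_Icc ⟨by linarith, by linarith⟩
  have hT0 : 0 ≤ T := sq_nonneg _
  have hTt0 : 0 ≤ Tt := sq_nonneg _
  -- lower bound for Tt
  have hT_lb : Dt^2 ≤ 40 * Tt := by
    rw [hTt_def, hDt_def]
    exact jordan_lb hDtπ hπ hπ'
  -- upper bound for T
  have hT_ub : T ≤ Dt^2 / 4 := by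
    have h5 : T ≤ ((θ - φ)/4)^2 := Real.sin_sq_le_sq
    have h6 : (θ - φ)^2 ≤ (2 * Dt)^2 := by
      rw [← sq_abs (θ - φ)]
      apply pow_le_pow_left₀ (abs_nonneg _) h2
    nlinarith
  -- Lipschitz bounds
  have hls : s ≤ st + Dt/2 := by
    have h := abs_sin_sub_sin' (θ/2) (θt/2)
    rw [show θ/2 - θt/2 = (θ - θt)/2 by ring, abs_div] at h
    have := le_abs_self (s - st)
    have h7 : |(2:ℝ)| = 2 := by norm_num
    rw [h7] at h
    linarith
  have hlsp : sp ≤ st + Dt/2 := by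
    have h := abs_sin_sub_sin' (φ/2) (θt/2)
    rw [show φ/2 - θt/2 = (φ - θt)/2 by ring, abs_div] at h
    have := le_abs_self (sp - st)
    have h7 : |(2:ℝ)| = 2 := by norm_num
    rw [h7, abs_sub_comm φ θt] at h
    linarith
  have hlc : c ≤ ct + Dt/2 := by
    have h := abs_cos_sub_cos' (θ/2) (θt/2)
    rw [show θ/2 - θt/2 = (θ - θt)/2 by ring, abs_div] at h
    have := le_abs_self (c - ct)
    have h7 : |(2:ℝ)| = 2 := by norm_num
    rw [h7] at h
    linarith
  have hlcp : cp ≤ ct + Dt/2 := by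
    have h := abs_cos_sub_cos' (φ/2) (θt/2)
    rw [show φ/2 - θt/2 = (φ - θt)/2 by ring, abs_div] at h
    have := le_abs_self (cp - ct)
    have h7 : |(2:ℝ)| = 2 := by norm_num
    rw [h7, abs_sub_comm φ θt] at h
    linarith
  rw [qK_eq' θ φ u v, qK_eq' θt φ u v]
  rw [← hs_def, ← hst_def, ← hsp_def, ← hc_def, ← hct_def, ← hcp_def, ← hT_def, ← hTt_def]
  -- sine part
  have hS : (1-u)*(s*sp) ≤ 2*((1-u)*(st*sp)) + 2*Dt^2 := by
    rcases le_or_gt Dt (2*st) with hcase | hcase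
    · nlinarith [mul_nonneg (mul_nonneg (show (0:ℝ) ≤ 1-u by linarith) hsp)
        (show 0 ≤ 2*st - s by linarith), mul_nonneg (mul_nonneg (show (0:ℝ) ≤ 1-u by linarith) hsp) hst,
        sq_nonneg Dt]
    · have hspDt : sp ≤ Dt := by linarith
      have hA : s*sp ≤ st*sp + Dt^2/2 := by
        nlinarith [mul_le_mul_of_nonneg_right hls hsp, mul_le_mul_of_nonneg_left hspDt (show (0:ℝ) ≤ Dt/2 by linarith)]
      nlinarith [mul_le_mul_of_nonneg_left hA (show (0:ℝ) ≤ 1-u by linarith),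
        mul_nonneg (show (0:ℝ) ≤ 1+u by linarith) (sq_nonneg Dt),
        mul_nonneg (mul_nonneg (show (0:ℝ) ≤ 1-u by linarith) hst) hsp]
  -- cosine part
  have hC : (1-v)*(c*cp) ≤ 2*((1-v)*(ct*cp)) + 2*Dt^2 := by
    rcases le_or_gt Dt (2*ct) with hcase | hcase
    · nlinarith [mul_nonneg (mul_nonneg (show (0:ℝ) ≤ 1-v by linarith) hcp)
        (show 0 ≤ 2*ct - c by linarith), mul_nonneg (mul_nonneg (show (0:ℝ) ≤ 1-v by linarith) hcp) hct,
        sq_nonneg Dt]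
    · have hcpDt : cp ≤ Dt := by linarith
      have hA : c*cp ≤ ct*cp + Dt^2/2 := by
        nlinarith [mul_le_mul_of_nonneg_right hlc hcp, mul_le_mul_of_nonneg_left hcpDt (show (0:ℝ) ≤ Dt/2 by linarith)]
      nlinarith [mul_le_mul_of_nonneg_left hA (show (0:ℝ) ≤ 1-v by linarith),
        mul_nonneg (show (0:ℝ) ≤ 1+v by linarith) (sq_nonneg Dt),
        mul_nonneg (mul_nonneg (show (0:ℝ) ≤ 1-v by linarith) hct) hcp]
  have hAt0 : 0 ≤ (1-u)*(st*sp) := mul_nonneg (by linarith) (mul_nonneg hst hsp)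
  have hBt0 : 0 ≤ (1-v)*(ct*cp) := mul_nonneg (by linarith) (mul_nonneg hct hcp)
  linarith

theorem stmt14 :
    ∃ c C : ℝ, 0 < c ∧ c ≤ C ∧
      (∀ θ θt φ u v : ℝ, θ ∈ Ioo 0 π → θt ∈ Ioo 0 π → φ ∈ Ioo 0 π →
        2 * |θ - θt| < |θ - φ| → u ∈ Icc (-1 : ℝ) 1 → v ∈ Icc (-1 : ℝ) 1 →
        c * qK θt φ u v ≤ qK θ φ u v ∧ qK θ φ u v ≤ C * qK θt φ u v) ∧
      (∀ θ φ φt u v : ℝ, θ ∈ Ioo 0 π → φ ∈ Ioo 0 π → φt ∈ Ioo 0 π →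
        2 * |φ - φt| < |θ - φ| → u ∈ Icc (-1 : ℝ) 1 → v ∈ Icc (-1 : ℝ) 1 →
        c * qK θ φt u v ≤ qK θ φ u v ∧ qK θ φ u v ≤ C * qK θ φt u v) := by
  have hsymm : ∀ a b u v : ℝ, qK a b u v = qK b a u v := by
    intro a b u v; unfold qK; ring
  refine ⟨1/200, 200, by norm_num, by norm_num, ?_, ?_⟩
  · intro θ θt φ u v hθ hθt hφ hlt hu hv
    have htri : |θ - φ| ≤ |θ - θt| + |θt - φ| := abs_sub_le _ _ _
    have htri2 : |θt - φ| ≤ |θt - θ| + |θ - φ| := abs_sub_le _ _ _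
    have hcomm : |θt - θ| = |θ - θt| := abs_sub_comm _ _
    have hu1 : |θ - θt| ≤ |θt - φ| := by linarith
    have hu2 : |θ - φ| ≤ 2 * |θt - φ| := by linarith
    have hl1 : |θt - θ| ≤ |θ - φ| := by linarith
    have hl2 : |θt - φ| ≤ 2 * |θ - φ| := by linarith
    constructor
    · have := qK_key hθt hθ hφ hu hv hl1 hl2
      linarith
    · have := qK_key hθ hθt hφ hu hv hu1 hu2
      linarith
  · intro θ φ φt u v hθ hφ hφt hlt hu hv
    have hc1 : |θ - φ| = |φ - θ| := abs_sub_comm _ _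
    have htri : |φ - θ| ≤ |φ - φt| + |φt - θ| := abs_sub_le _ _ _
    have htri2 : |φt - θ| ≤ |φt - φ| + |φ - θ| := abs_sub_le _ _ _
    have hcomm : |φt - φ| = |φ - φt| := abs_sub_comm _ _
    rw [hc1] at hlt
    have hu1 : |φ - φt| ≤ |φt - θ| := by linarith
    have hu2 : |φ - θ| ≤ 2 * |φt - θ| := by linarith
    have hl1 : |φt - φ| ≤ |φ - θ| := by linarith
    have hl2 : |φt - θ| ≤ 2 * |φ - θ| := by linarith
    constructor
    · have := qK_key hφt hφ hθ hu hv (by rw [hcomm] at hl1 ⊢; exact hl1) hl2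
      rw [hsymm φt θ, hsymm φ θ] at this
      linarith
    · have := qK_key hφ hφt hθ hu hv hu1 hu2
      rw [hsymm φ θ, hsymm φt θ] at this
      linarith
end

section
/- Let α, β ≥ -1/2 and let N ≥ 0 be an integer. There exists a constant C = C(α,β,N) such that for all θ, φ ∈ (0,π), all u, v ∈ [-1,1] and all t > 0, writing D^N for the N-th partial derivative in θ of the function θ ↦ (cosh(t/2) - 1 + q(θ,φ,u,v))^{-(α+β+2)}, one has: if 0 < t ≤ 1 then |D^N| ≤ C · (cosh(t/2) - 1 + q(θ,φ,u,v))^{-(α+β+2+N/2)}, and if t > 1 and N ≥ 1 then |D^N| ≤ C · (cosh(t/2) - 1 + q(θ,φ,u,v))^{-(α+β+5/2)}. -/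
open Real MeasureTheory Set
open scoped ENNReal

/-- derivative of `qK` in its first argument -/
noncomputable def Qd (φ u v x : ℝ) : ℝ :=
  (v * (Real.sin (x / 2) * Real.cos (φ / 2)) - u * (Real.cos (x / 2) * Real.sin (φ / 2))) / 2

lemma hasDerivAt_half (x : ℝ) : HasDerivAt (fun y : ℝ => y / 2) (1 / 2) x := by
  simpa using (hasDerivAt_id x).div_const 2

lemma hasDerivAt_sin_half (x : ℝ) :
    HasDerivAt (fun y : ℝ => Real.sin (y / 2)) (Real.cos (x / 2) * (1 / 2)) x :=
  by have := (Real.hasDerivAt_sin (x / 2)).comp x (hasDerivAt_half x); exact this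

lemma hasDerivAt_cos_half (x : ℝ) :
    HasDerivAt (fun y : ℝ => Real.cos (y / 2)) (-Real.sin (x / 2) * (1 / 2)) x :=
  by have := (Real.hasDerivAt_cos (x / 2)).comp x (hasDerivAt_half x); exact this

lemma hasDerivAt_qK (φ u v x : ℝ) :
    HasDerivAt (fun y => qK y φ u v) (Qd φ u v x) x := by
  have h : HasDerivAt (fun y => qK y φ u v)
      (0 - u * (Real.cos (x / 2) * (1 / 2) * Real.sin (φ / 2))
        - v * (-Real.sin (x / 2) * (1 / 2) * Real.cos (φ / 2))) x := by
    exact (((hasDerivAt_const x (1:ℝ)).sub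
      (((hasDerivAt_sin_half x).mul_const (Real.sin (φ / 2))).const_mul u)).sub
      (((hasDerivAt_cos_half x).mul_const (Real.cos (φ / 2))).const_mul v))
  convert h using 1
  unfold Qd; ring

lemma hasDerivAt_Qd (φ u v x : ℝ) :
    HasDerivAt (Qd φ u v) ((1 - qK x φ u v) / 4) x := by
  have h : HasDerivAt (Qd φ u v)
      ((v * (Real.cos (x / 2) * (1 / 2) * Real.cos (φ / 2))
        - u * (-Real.sin (x / 2) * (1 / 2) * Real.sin (φ / 2))) / 2) x := by
    exact ((((hasDerivAt_sin_half x).mul_const (Real.cos (φ / 2))).const_mul v).sub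
      (((hasDerivAt_cos_half x).mul_const (Real.sin (φ / 2))).const_mul u)).div_const 2
  convert h using 1
  unfold qK; ring

lemma qd_sq_le_qK (φ u v x : ℝ) (hu : u ^ 2 ≤ 1) (hv : v ^ 2 ≤ 1) :
    Qd φ u v x ^ 2 ≤ qK x φ u v := by
  have hs := Real.sin_sq_add_cos_sq (x / 2)
  have hS := Real.sin_sq_add_cos_sq (φ / 2)
  unfold Qd qK
  set s := Real.sin (x / 2); set c := Real.cos (x / 2)
  set S := Real.sin (φ / 2); set C := Real.cos (φ / 2)
  nlinarith [sq_nonneg (u*S*s + v*C*c), sq_nonneg (v*C*s - u*S*c), sq_nonneg (u*S*c - v*C*s),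
    sq_nonneg (u*S + v*C), sq_nonneg (u*S - v*C), sq_nonneg (S*s+C*c), sq_nonneg (S*s-C*c),
    sq_nonneg (1 - u*s*S - v*c*C)]

lemma abs_one_sub_qK (φ u v x : ℝ) (hu : u ^ 2 ≤ 1) (hv : v ^ 2 ≤ 1) :
    |1 - qK x φ u v| ≤ 1 := by
  have hs := Real.sin_sq_add_cos_sq (x / 2)
  have hS := Real.sin_sq_add_cos_sq (φ / 2)
  rw [← sq_le_one_iff_abs_le_one]
  unfold qK
  set s := Real.sin (x / 2); set c := Real.cos (x / 2)
  set S := Real.sin (φ / 2); set C := Real.cos (φ / 2)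
  nlinarith [sq_nonneg (u*S*c - v*C*s), mul_nonneg (sub_nonneg.2 hu) (sq_nonneg S),
    mul_nonneg (sub_nonneg.2 hv) (sq_nonneg C), sq_nonneg s, sq_nonneg c]

lemma qK_nonneg (φ u v x : ℝ) (hu : u ^ 2 ≤ 1) (hv : v ^ 2 ≤ 1) : 0 ≤ qK x φ u v := by
  have h := abs_one_sub_qK φ u v x hu hv
  rw [abs_le] at h; linarith [h.2]

lemma qK_le_two (φ u v x : ℝ) (hu : u ^ 2 ≤ 1) (hv : v ^ 2 ≤ 1) : qK x φ u v ≤ 2 := by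
  have h := abs_one_sub_qK φ u v x hu hv
  rw [abs_le] at h; linarith [h.1]

structure Trm where
  a : ℝ
  j : ℕ
  p : ℕ
  r : ℕ

noncomputable def stepT (s : ℝ) (T : Trm) : List Trm :=
  ⟨-T.a * (s + T.j), T.j + 1, T.p + 1, T.r⟩ ::
    ((match T.p with
      | 0 => []
      | p' + 1 => [⟨T.a * (p' + 1) / 4, T.j, p', T.r + 1⟩]) ++
     (match T.r with
      | 0 => []
      | r' + 1 => [⟨-(T.a * (r' + 1)), T.j, T.p + 1, r'⟩]))

noncomputable def TL (s : ℝ) : ℕ → List Trm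
  | 0 => [⟨1, 0, 0, 0⟩]
  | N + 1 => (TL s N).flatMap (stepT s)

noncomputable def termF (c s φ u v : ℝ) (T : Trm) (x : ℝ) : ℝ :=
  T.a * (c + qK x φ u v) ^ (-(s + (T.j : ℝ))) * Qd φ u v x ^ T.p * (1 - qK x φ u v) ^ T.r

def TInv (N : ℕ) (T : Trm) : Prop :=
  2 * T.j ≤ T.p + N ∧ (T.j = 0 → T.p = 0 ∧ T.r = 0 ∧ N = 0)

lemma inv_TL (s : ℝ) (N : ℕ) : ∀ T ∈ TL s N, TInv N T := by
  induction N with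
  | zero => intro T hT; simp [TL] at hT; subst hT; constructor <;> simp
  | succ N ih =>
    intro T hT
    rw [TL, List.mem_flatMap] at hT
    obtain ⟨T₀, hT₀, hmem⟩ := hT
    have inv₀ := ih T₀ hT₀
    obtain ⟨a, j, p, r⟩ := T₀
    obtain ⟨h1, h2⟩ := inv₀
    simp only [TInv] at h1 h2 ⊢
    rcases p with _ | p' <;> rcases r with _ | r' <;>
      simp only [stepT, List.mem_cons, List.mem_append, List.mem_singleton,
        List.not_mem_nil, or_false, List.nil_append, List.append_nil] at hmem <;>
      rcases hmem with rfl | rfl | rfl <;> simp_all <;> omega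

lemma hasDerivAt_termF {c : ℝ} (s φ u v : ℝ) (hc : 0 < c) (hu : u ^ 2 ≤ 1) (hv : v ^ 2 ≤ 1)
    (T : Trm) (x : ℝ) :
    HasDerivAt (fun y => termF c s φ u v T y)
      (((stepT s T).map (fun T' => termF c s φ u v T' x)).sum) x := by
  obtain ⟨a, j, p, r⟩ := T
  have hb : (0:ℝ) < c + qK x φ u v := by
    have := qK_nonneg φ u v x hu hv; linarith
  have hQ : HasDerivAt (fun y => c + qK y φ u v) (Qd φ u v x) x :=
    (hasDerivAt_qK φ u v x).const_add c
  have h1 : HasDerivAt (fun y => (c + qK y φ u v) ^ (-(s + (j:ℝ))))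
      (Qd φ u v x * (-(s + (j:ℝ))) * (c + qK x φ u v) ^ (-(s + (j:ℝ)) - 1)) x :=
    hQ.rpow_const (Or.inl (ne_of_gt hb))
  have h2 : HasDerivAt (fun y => Qd φ u v y ^ p)
      ((p : ℝ) * Qd φ u v x ^ (p - 1) * ((1 - qK x φ u v) / 4)) x :=
    (hasDerivAt_Qd φ u v x).pow p
  have h3 : HasDerivAt (fun y => (1 - qK y φ u v) ^ r)
      ((r : ℝ) * (1 - qK x φ u v) ^ (r - 1) * (-Qd φ u v x)) x :=
    ((hasDerivAt_qK φ u v x).const_sub 1).pow r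
  have h := ((h1.mul (h2.mul h3)).const_mul a)
  have hexp : (-(s + (j:ℝ)) - 1) = -(s + ((j + 1 : ℕ) : ℝ)) := by push_cast; ring
  rw [hexp] at h
  have h' : HasDerivAt (fun y => termF c s φ u v ⟨a, j, p, r⟩ y)
      (a * (Qd φ u v x * (-(s + (j:ℝ))) * (c + qK x φ u v) ^ (-(s + ((j + 1 : ℕ) : ℝ))) *
          (Qd φ u v x ^ p * (1 - qK x φ u v) ^ r) +
        (c + qK x φ u v) ^ (-(s + (j:ℝ))) *
          ((p : ℝ) * Qd φ u v x ^ (p - 1) * ((1 - qK x φ u v) / 4) * (1 - qK x φ u v) ^ r +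
           Qd φ u v x ^ p * ((r : ℝ) * (1 - qK x φ u v) ^ (r - 1) * (-Qd φ u v x))))) x := by
    exact h.congr_of_eventuallyEq (Filter.Eventually.of_forall fun y => by simp only [termF, Pi.mul_apply]; ring)
  convert h' using 1
  rcases p with _ | p' <;> rcases r with _ | r' <;>
    simp only [stepT, List.map_cons, List.map_append, List.map_nil, List.sum_cons,
      List.sum_append, List.sum_nil, List.map, termF] <;> push_cast <;> ring

lemma hasDerivAt_sumTerm {c : ℝ} (s φ u v : ℝ) (hc : 0 < c) (hu : u ^ 2 ≤ 1) (hv : v ^ 2 ≤ 1)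
    (L : List Trm) (x : ℝ) :
    HasDerivAt (fun y => (L.map (fun T => termF c s φ u v T y)).sum)
      (((L.flatMap (stepT s)).map (fun T' => termF c s φ u v T' x)).sum) x := by
  induction L with
  | nil => simpa using hasDerivAt_const x (0:ℝ)
  | cons T L ih =>
    have h := (hasDerivAt_termF s φ u v hc hu hv T x).add ih
    simp only [List.flatMap_cons, List.map_cons, List.map_append, List.sum_cons, List.sum_append]
    exact h

lemma iter_formula {c : ℝ} (s φ u v : ℝ) (hc : 0 < c) (hu : u ^ 2 ≤ 1) (hv : v ^ 2 ≤ 1)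
    (N : ℕ) :
    ∀ x, iteratedDeriv N (fun y => (c + qK y φ u v) ^ (-s)) x
      = ((TL s N).map (fun T => termF c s φ u v T x)).sum := by
  induction N with
  | zero =>
    intro x
    simp only [iteratedDeriv_zero, TL, List.map_cons, List.map_nil, List.sum_cons,
      List.sum_nil, termF]
    norm_num
  | succ N ih =>
    intro x
    rw [iteratedDeriv_succ]
    have hfun : iteratedDeriv N (fun y => (c + qK y φ u v) ^ (-s))
        = fun x => ((TL s N).map (fun T => termF c s φ u v T x)).sum := funext ih
    rw [hfun]
    exact (hasDerivAt_sumTerm s φ u v hc hu hv (TL s N) x).deriv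

lemma termF_abs_eq (c s φ u v : ℝ) (T : Trm) (x : ℝ) (hb : 0 < c + qK x φ u v) :
    |termF c s φ u v T x| = |T.a| * (c + qK x φ u v) ^ (-(s + (T.j : ℝ)))
      * |Qd φ u v x| ^ T.p * |1 - qK x φ u v| ^ T.r := by
  rw [termF, abs_mul, abs_mul, abs_mul, abs_pow, abs_pow,
    abs_of_pos (Real.rpow_pos_of_pos hb _)]

lemma bound_termA {c : ℝ} (s φ u v : ℝ) {N : ℕ} (hc : 0 < c)
    (hcM : c ≤ Real.cosh (1/2) - 1) (hu : u ^ 2 ≤ 1) (hv : v ^ 2 ≤ 1)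
    (T : Trm) (hinv : TInv N T) (x : ℝ) :
    |termF c s φ u v T x| ≤
      (|T.a| * (Real.cosh (1/2) + 1) ^ (((T.p + N : ℕ) : ℝ) / 2)) *
        (c + qK x φ u v) ^ (-(s + (N : ℝ) / 2)) := by
  obtain ⟨a, j, p, r⟩ := T
  obtain ⟨hinv1, -⟩ := hinv
  simp only at hinv1 ⊢
  have hQ0 := qK_nonneg φ u v x hu hv
  have hQ2 := qK_le_two φ u v x hu hv
  have hb : (0:ℝ) < c + qK x φ u v := by linarith
  have hbM : c + qK x φ u v ≤ Real.cosh (1/2) + 1 := by linarith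
  have hM1 : (1:ℝ) ≤ Real.cosh (1/2) + 1 := by linarith [Real.one_le_cosh (1/2 : ℝ)]
  set b := c + qK x φ u v with hbdef
  have habs : |Qd φ u v x| ≤ b ^ ((1:ℝ)/2) := by
    have h1 : Qd φ u v x ^ 2 ≤ b := le_trans (qd_sq_le_qK φ u v x hu hv) (by simp [hbdef]; linarith)
    calc |Qd φ u v x| = Real.sqrt (Qd φ u v x ^ 2) := (Real.sqrt_sq_eq_abs _).symm
      _ ≤ Real.sqrt b := Real.sqrt_le_sqrt h1
      _ = b ^ ((1:ℝ)/2) := Real.sqrt_eq_rpow b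
  have hQdp : |Qd φ u v x| ^ p ≤ b ^ ((p:ℝ)/2) := by
    calc |Qd φ u v x| ^ p ≤ (b ^ ((1:ℝ)/2)) ^ p := pow_le_pow_left₀ (abs_nonneg _) habs p
      _ = b ^ ((p:ℝ)/2) := by
          rw [← Real.rpow_natCast (b ^ ((1:ℝ)/2)) p, ← Real.rpow_mul hb.le]
          congr 1; ring
  have h1mQ : |1 - qK x φ u v| ^ r ≤ 1 :=
    pow_le_one₀ (abs_nonneg _) (abs_one_sub_qK φ u v x hu hv)
  have hjc : 2 * (j:ℝ) ≤ (p:ℝ) + (N:ℝ) := by exact_mod_cast hinv1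
  have hd0 : (0:ℝ) ≤ (p:ℝ)/2 + (N:ℝ)/2 - (j:ℝ) := by linarith
  have hMd : b ^ ((p:ℝ)/2 + (N:ℝ)/2 - (j:ℝ))
      ≤ (Real.cosh (1/2) + 1) ^ (((p + N : ℕ) : ℝ) / 2) := by
    calc b ^ ((p:ℝ)/2 + (N:ℝ)/2 - (j:ℝ))
        ≤ (Real.cosh (1/2) + 1) ^ ((p:ℝ)/2 + (N:ℝ)/2 - (j:ℝ)) :=
          Real.rpow_le_rpow hb.le hbM hd0
      _ ≤ (Real.cosh (1/2) + 1) ^ (((p + N : ℕ) : ℝ) / 2) :=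
          Real.rpow_le_rpow_of_exponent_le hM1 (by push_cast; linarith)
  calc |termF c s φ u v ⟨a,j,p,r⟩ x|
      = |a| * b ^ (-(s + (j:ℝ))) * |Qd φ u v x| ^ p * |1 - qK x φ u v| ^ r :=
        termF_abs_eq c s φ u v ⟨a,j,p,r⟩ x hb
    _ ≤ |a| * b ^ (-(s + (j:ℝ))) * b ^ ((p:ℝ)/2) * 1 := by
        gcongr
    _ = |a| * b ^ (-(s + (j:ℝ)) + (p:ℝ)/2) := by
        rw [mul_one, mul_assoc, ← Real.rpow_add hb]
    _ = |a| * (b ^ (-(s + (N:ℝ)/2)) * b ^ ((p:ℝ)/2 + (N:ℝ)/2 - (j:ℝ))) := by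
        rw [show -(s + (j:ℝ)) + (p:ℝ)/2
            = -(s + (N:ℝ)/2) + ((p:ℝ)/2 + (N:ℝ)/2 - (j:ℝ)) from by ring,
          Real.rpow_add hb]
    _ ≤ |a| * (b ^ (-(s + (N:ℝ)/2)) * (Real.cosh (1/2) + 1) ^ (((p + N : ℕ) : ℝ) / 2)) := by
        gcongr
    _ = (|a| * (Real.cosh (1/2) + 1) ^ (((p + N : ℕ) : ℝ) / 2)) * b ^ (-(s + (N:ℝ)/2)) := by
        ring

lemma bound_termB {c : ℝ} (s φ u v : ℝ) {N : ℕ} (hN : 1 ≤ N)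
    (hc1 : Real.cosh (1/2) - 1 ≤ c) (hu : u ^ 2 ≤ 1) (hv : v ^ 2 ≤ 1)
    (T : Trm) (hinv : TInv N T) (x : ℝ) :
    |termF c s φ u v T x| ≤
      (|T.a| * 2 ^ T.p * (Real.cosh (1/2) - 1) ^ ((1:ℝ)/2 - (T.j : ℝ))) *
        (c + qK x φ u v) ^ (-(s + 1/2)) := by
  obtain ⟨a, j, p, r⟩ := T
  obtain ⟨-, hinv2⟩ := hinv
  simp only at hinv2 ⊢
  have hj : 1 ≤ j := by
    rcases Nat.eq_zero_or_pos j with h | h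
    · exact absurd (hinv2 h).2.2 (by omega)
    · exact h
  have hc1pos : (0:ℝ) < Real.cosh (1/2) - 1 := by
    have : (1:ℝ) < Real.cosh (1/2) := Real.one_lt_cosh.2 (by norm_num)
    linarith
  have hQ0 := qK_nonneg φ u v x hu hv
  have hQ2 := qK_le_two φ u v x hu hv
  have hb : (0:ℝ) < c + qK x φ u v := by linarith
  have hbc1 : Real.cosh (1/2) - 1 ≤ c + qK x φ u v := by linarith
  set b := c + qK x φ u v with hbdef
  have hQd2 : |Qd φ u v x| ≤ 2 := by
    rw [abs_le]
    constructor <;> nlinarith [qd_sq_le_qK φ u v x hu hv]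
  have hQdp : |Qd φ u v x| ^ p ≤ 2 ^ p := pow_le_pow_left₀ (abs_nonneg _) hQd2 p
  have h1mQ : |1 - qK x φ u v| ^ r ≤ 1 :=
    pow_le_one₀ (abs_nonneg _) (abs_one_sub_qK φ u v x hu hv)
  have hjr : (1:ℝ) ≤ (j:ℝ) := by exact_mod_cast hj
  have hbj : b ^ ((1:ℝ)/2 - (j:ℝ)) ≤ (Real.cosh (1/2) - 1) ^ ((1:ℝ)/2 - (j:ℝ)) :=
    Real.rpow_le_rpow_of_nonpos hc1pos hbc1 (by linarith)
  calc |termF c s φ u v ⟨a,j,p,r⟩ x|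
      = |a| * b ^ (-(s + (j:ℝ))) * |Qd φ u v x| ^ p * |1 - qK x φ u v| ^ r :=
        termF_abs_eq c s φ u v ⟨a,j,p,r⟩ x hb
    _ ≤ |a| * b ^ (-(s + (j:ℝ))) * (2:ℝ) ^ p * 1 := by
        gcongr
    _ = |a| * (2:ℝ) ^ p * (b ^ (-(s + 1/2)) * b ^ ((1:ℝ)/2 - (j:ℝ))) := by
        rw [mul_one, show -(s + (j:ℝ)) = -(s + 1/2) + ((1:ℝ)/2 - (j:ℝ)) from by ring,
          Real.rpow_add hb]
        ring
    _ ≤ |a| * (2:ℝ) ^ p * (b ^ (-(s + 1/2)) * (Real.cosh (1/2) - 1) ^ ((1:ℝ)/2 - (j:ℝ))) := by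
        gcongr
    _ = (|a| * 2 ^ p * (Real.cosh (1/2) - 1) ^ ((1:ℝ)/2 - (j:ℝ))) * b ^ (-(s + 1/2)) := by
        ring

lemma list_abs_sum_le (L : List Trm) (f g : Trm → ℝ) (h : ∀ T ∈ L, |f T| ≤ g T) :
    |(L.map f).sum| ≤ (L.map g).sum := by
  induction L with
  | nil => simp
  | cons T L ih =>
    simp only [List.map_cons, List.sum_cons]
    refine le_trans (abs_add_le _ _) ?_
    have h1 := h T List.mem_cons_self
    have h2 := ih (fun T' hT' => h T' (List.mem_cons_of_mem _ hT'))
    linarith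

lemma list_sum_map_mul (L : List Trm) (f : Trm → ℝ) (x : ℝ) :
    (L.map fun T => f T * x).sum = (L.map f).sum * x := by
  induction L with
  | nil => simp
  | cons T L ih => simp [List.map_cons, List.sum_cons, ih, add_mul]

lemma list_sum_le_sum' (L : List Trm) (f g : Trm → ℝ) (h : ∀ T ∈ L, f T ≤ g T) :
    (L.map f).sum ≤ (L.map g).sum := by
  induction L with
  | nil => simp
  | cons T L ih =>
    simp only [List.map_cons, List.sum_cons]
    have h1 := h T List.mem_cons_self
    have h2 := ih (fun T' hT' => h T' (List.mem_cons_of_mem _ hT'))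
    linarith

noncomputable def KA (N : ℕ) (T : Trm) : ℝ :=
  |T.a| * (Real.cosh (1/2) + 1) ^ (((T.p + N : ℕ) : ℝ) / 2)

noncomputable def KB (T : Trm) : ℝ :=
  |T.a| * 2 ^ T.p * (Real.cosh (1/2) - 1) ^ ((1:ℝ)/2 - (T.j : ℝ))

lemma KA_nonneg (N : ℕ) (T : Trm) : 0 ≤ KA N T :=
  mul_nonneg (abs_nonneg _) (Real.rpow_nonneg (by positivity) _)

lemma KB_nonneg (T : Trm) : 0 ≤ KB T := by
  have h : (0:ℝ) < Real.cosh (1/2) - 1 := by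
    have : (1:ℝ) < Real.cosh (1/2) := Real.one_lt_cosh.2 (by norm_num)
    linarith
  exact mul_nonneg (mul_nonneg (abs_nonneg _) (by positivity)) (Real.rpow_nonneg h.le _)

theorem stmt15 (α β : ℝ) (hα : -(1/2) ≤ α) (hβ : -(1/2) ≤ β) (N : ℕ) :
    ∃ C : ℝ, 0 < C ∧ ∀ θ φ u v t : ℝ, θ ∈ Ioo 0 π → φ ∈ Ioo 0 π →
      u ∈ Icc (-1 : ℝ) 1 → v ∈ Icc (-1 : ℝ) 1 → 0 < t →
      (t ≤ 1 →
        |iteratedDeriv N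
            (fun x => (Real.cosh (t / 2) - 1 + qK x φ u v) ^ (-(α + β + 2))) θ|
          ≤ C * (Real.cosh (t / 2) - 1 + qK θ φ u v) ^ (-(α + β + 2 + (N : ℝ) / 2))) ∧
      (1 < t → 1 ≤ N →
        |iteratedDeriv N
            (fun x => (Real.cosh (t / 2) - 1 + qK x φ u v) ^ (-(α + β + 2))) θ|
          ≤ C * (Real.cosh (t / 2) - 1 + qK θ φ u v) ^ (-(α + β + 5/2))) := by
  set L := TL (α + β + 2) N with hL
  refine ⟨1 + (L.map (fun T => KA N T + KB T)).sum, ?_, ?_⟩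
  · have hsum : 0 ≤ (L.map (fun T => KA N T + KB T)).sum := by
      apply List.sum_nonneg
      intro x hx
      obtain ⟨T, hT, rfl⟩ := List.mem_map.1 hx
      exact add_nonneg (KA_nonneg N T) (KB_nonneg T)
    linarith
  intro θ φ u v t hθ hφ hu hv ht
  have hu2 : u ^ 2 ≤ 1 := by nlinarith [hu.1, hu.2]
  have hv2 : v ^ 2 ≤ 1 := by nlinarith [hv.1, hv.2]
  have hc : (0:ℝ) < Real.cosh (t / 2) - 1 := by
    have : (1:ℝ) < Real.cosh (t / 2) := Real.one_lt_cosh.2 (by positivity)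
    linarith
  have hQ0 := qK_nonneg φ u v θ hu2 hv2
  have hb : (0:ℝ) < Real.cosh (t / 2) - 1 + qK θ φ u v := by linarith
  have hsumKA : (L.map (KA N)).sum ≤ 1 + (L.map (fun T => KA N T + KB T)).sum := by
    have h1 : (L.map (KA N)).sum ≤ (L.map (fun T => KA N T + KB T)).sum :=
      list_sum_le_sum' L _ _ (fun T _ => by linarith [KB_nonneg T])
    linarith
  have hsumKB : (L.map KB).sum ≤ 1 + (L.map (fun T => KA N T + KB T)).sum := by
    have h1 : (L.map KB).sum ≤ (L.map (fun T => KA N T + KB T)).sum :=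
      list_sum_le_sum' L _ _ (fun T _ => by linarith [KA_nonneg N T])
    linarith
  constructor
  · -- case t ≤ 1
    intro ht1
    have hcM : Real.cosh (t / 2) - 1 ≤ Real.cosh (1/2) - 1 := by
      have : Real.cosh (t / 2) ≤ Real.cosh (1/2) := by
        rw [Real.cosh_le_cosh, abs_of_pos (by positivity), abs_of_pos (by norm_num)]
        linarith
      linarith
    rw [iter_formula (α + β + 2) φ u v hc hu2 hv2 N θ]
    calc |(L.map (fun T => termF (Real.cosh (t / 2) - 1) (α + β + 2) φ u v T θ)).sum|
        ≤ (L.map (fun T =>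
            KA N T * (Real.cosh (t / 2) - 1 + qK θ φ u v) ^ (-(α + β + 2 + (N:ℝ)/2)))).sum := by
          apply list_abs_sum_le
          intro T hT
          have := bound_termA (α + β + 2) φ u v hc hcM hu2 hv2 T (inv_TL _ N T hT) θ
          simpa [KA] using this
      _ = (L.map (KA N)).sum * (Real.cosh (t / 2) - 1 + qK θ φ u v) ^ (-(α + β + 2 + (N:ℝ)/2)) :=
          list_sum_map_mul L _ _
      _ ≤ (1 + (L.map (fun T => KA N T + KB T)).sum) *
            (Real.cosh (t / 2) - 1 + qK θ φ u v) ^ (-(α + β + 2 + (N:ℝ)/2)) :=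
          mul_le_mul_of_nonneg_right hsumKA (Real.rpow_nonneg hb.le _)
  · -- case 1 < t
    intro ht1 hN1
    have hc1 : Real.cosh (1/2) - 1 ≤ Real.cosh (t / 2) - 1 := by
      have : Real.cosh (1/2) ≤ Real.cosh (t / 2) := by
        rw [Real.cosh_le_cosh, abs_of_pos (by norm_num), abs_of_pos (by positivity)]
        linarith
      linarith
    rw [iter_formula (α + β + 2) φ u v hc hu2 hv2 N θ,
      show -(α + β + 5/2) = -(α + β + 2 + 1/2) from by ring]
    calc |(L.map (fun T => termF (Real.cosh (t / 2) - 1) (α + β + 2) φ u v T θ)).sum|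
        ≤ (L.map (fun T =>
            KB T * (Real.cosh (t / 2) - 1 + qK θ φ u v) ^ (-(α + β + 2 + 1/2)))).sum := by
          apply list_abs_sum_le
          intro T hT
          have := bound_termB (α + β + 2) φ u v hN1 hc1 hu2 hv2 T (inv_TL _ N T hT) θ
          simpa [KB] using this
      _ = (L.map KB).sum * (Real.cosh (t / 2) - 1 + qK θ φ u v) ^ (-(α + β + 2 + 1/2)) :=
          list_sum_map_mul L _ _
      _ ≤ (1 + (L.map (fun T => KA N T + KB T)).sum) *
            (Real.cosh (t / 2) - 1 + qK θ φ u v) ^ (-(α + β + 2 + 1/2)) :=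
          mul_le_mul_of_nonneg_right hsumKB (Real.rpow_nonneg hb.le _)
end

section
/- Let α, β ≥ -1/2 and let N ≥ 0 be an integer. There exists a constant C = C(α,β,N) such that for all θ, φ ∈ (0,π), all u, v ∈ [-1,1] and all t > 0, writing ∂_φ D^N for the partial derivative in φ of the N-th partial derivative in θ of the function (θ,φ) ↦ (cosh(t/2) - 1 + q(θ,φ,u,v))^{-(α+β+2)}, one has: if 0 < t ≤ 1 then |∂_φ D^N| ≤ C · (cosh(t/2) - 1 + q(θ,φ,u,v))^{-(α+β+5/2+N/2)}, and if t > 1 then |∂_φ D^N| ≤ C · (cosh(t/2) - 1 + q(θ,φ,u,v))^{-(α+β+5/2)}. -/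
open Real MeasureTheory Set
open scoped ENNReal

section Stmt16Aux
noncomputable def auxS (u v x y : ℝ) : ℝ :=
  u * (Real.sin (y/2) * Real.sin (x/2)) + v * (Real.cos (y/2) * Real.cos (x/2))
noncomputable def auxT (u v x y : ℝ) : ℝ :=
  u * (Real.sin (y/2) * Real.cos (x/2)) - v * (Real.cos (y/2) * Real.sin (x/2))
noncomputable def auxU (u v x y : ℝ) : ℝ :=
  u * (Real.cos (y/2) * Real.sin (x/2)) - v * (Real.sin (y/2) * Real.cos (x/2))
noncomputable def auxV (u v x y : ℝ) : ℝ :=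
  u * (Real.cos (y/2) * Real.cos (x/2)) + v * (Real.sin (y/2) * Real.sin (x/2))

lemma half_sin (w : ℝ) : HasDerivAt (fun w : ℝ => Real.sin (w/2)) (Real.cos (w/2) * (1/2)) w :=
  ((hasDerivAt_id w).div_const 2).sin
lemma half_cos (w : ℝ) : HasDerivAt (fun w : ℝ => Real.cos (w/2)) (-Real.sin (w/2) * (1/2)) w :=
  ((hasDerivAt_id w).div_const 2).cos

lemma hS_x (u v x y : ℝ) : HasDerivAt (fun x => auxS u v x y) (auxT u v x y / 2) x := by
  have h := ((half_sin x).const_mul (Real.sin (y/2))).const_mul u |>.add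
    (((half_cos x).const_mul (Real.cos (y/2))).const_mul v)
  refine h.congr_deriv ?_; simp [auxT]; ring
lemma hT_x (u v x y : ℝ) : HasDerivAt (fun x => auxT u v x y) (-auxS u v x y / 2) x := by
  have h := ((half_cos x).const_mul (Real.sin (y/2))).const_mul u |>.sub
    (((half_sin x).const_mul (Real.cos (y/2))).const_mul v)
  refine h.congr_deriv ?_; simp [auxS]; ring
lemma hU_x (u v x y : ℝ) : HasDerivAt (fun x => auxU u v x y) (auxV u v x y / 2) x := by
  have h := ((half_sin x).const_mul (Real.cos (y/2))).const_mul u |>.sub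
    (((half_cos x).const_mul (Real.sin (y/2))).const_mul v)
  refine h.congr_deriv ?_; simp [auxV]; ring
lemma hV_x (u v x y : ℝ) : HasDerivAt (fun x => auxV u v x y) (-auxU u v x y / 2) x := by
  have h := ((half_cos x).const_mul (Real.cos (y/2))).const_mul u |>.add
    (((half_sin x).const_mul (Real.sin (y/2))).const_mul v)
  refine h.congr_deriv ?_; simp [auxU]; ring

lemma hS_y (u v x y : ℝ) : HasDerivAt (fun y => auxS u v x y) (auxU u v x y / 2) y := by
  have h := ((half_sin y).mul_const (Real.sin (x/2))).const_mul u |>.add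
    (((half_cos y).mul_const (Real.cos (x/2))).const_mul v)
  refine h.congr_deriv ?_; simp [auxU]; ring
lemma hT_y (u v x y : ℝ) : HasDerivAt (fun y => auxT u v x y) (auxV u v x y / 2) y := by
  have h := ((half_sin y).mul_const (Real.cos (x/2))).const_mul u |>.sub
    (((half_cos y).mul_const (Real.sin (x/2))).const_mul v)
  refine h.congr_deriv ?_; simp [auxV]; ring
lemma hU_y (u v x y : ℝ) : HasDerivAt (fun y => auxU u v x y) (-auxS u v x y / 2) y := by
  have h := ((half_cos y).mul_const (Real.sin (x/2))).const_mul u |>.sub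
    (((half_sin y).mul_const (Real.cos (x/2))).const_mul v)
  refine h.congr_deriv ?_; simp [auxS]; ring
lemma hV_y (u v x y : ℝ) : HasDerivAt (fun y => auxV u v x y) (-auxT u v x y / 2) y := by
  have h := ((half_cos y).mul_const (Real.cos (x/2))).const_mul u |>.add
    (((half_sin y).mul_const (Real.sin (x/2))).const_mul v)
  refine h.congr_deriv ?_; simp [auxT]; ring

structure AMono where
  c : ℝ
  j : ℕ
  a : ℕ
  b : ℕ
  d : ℕ
  e : ℕ

noncomputable def AMono.ev (s A u v : ℝ) (m : AMono) (x y : ℝ) : ℝ :=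
  m.c * (A + 1 - auxS u v x y) ^ (-s - (m.j:ℝ)) * auxS u v x y ^ m.a *
    auxT u v x y ^ m.b * auxU u v x y ^ m.d * auxV u v x y ^ m.e

noncomputable def AMono.dx (s : ℝ) (m : AMono) : List AMono :=
  [⟨m.c * (s + m.j) * (1/2), m.j+1, m.a, m.b+1, m.d, m.e⟩,
   ⟨m.c * m.a * (1/2), m.j, m.a-1, m.b+1, m.d, m.e⟩,
   ⟨-(m.c * m.b * (1/2)), m.j, m.a+1, m.b-1, m.d, m.e⟩,
   ⟨m.c * m.d * (1/2), m.j, m.a, m.b, m.d-1, m.e+1⟩,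
   ⟨-(m.c * m.e * (1/2)), m.j, m.a, m.b, m.d+1, m.e-1⟩]

noncomputable def AMono.dy (s : ℝ) (m : AMono) : List AMono :=
  [⟨m.c * (s + m.j) * (1/2), m.j+1, m.a, m.b, m.d+1, m.e⟩,
   ⟨m.c * m.a * (1/2), m.j, m.a-1, m.b, m.d+1, m.e⟩,
   ⟨m.c * m.b * (1/2), m.j, m.a, m.b-1, m.d, m.e+1⟩,
   ⟨-(m.c * m.d * (1/2)), m.j, m.a+1, m.b, m.d-1, m.e⟩,
   ⟨-(m.c * m.e * (1/2)), m.j, m.a, m.b+1, m.d, m.e-1⟩]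

def AMono.ok (M : ℕ) (m : AMono) : Prop :=
  m.c = 0 ∨ ((M = 0 ∨ 1 ≤ m.j) ∧ m.j ≤ M ∧ m.a + m.b + m.d + m.e ≤ 2*m.j ∧
    2*m.j ≤ M + (m.b + m.d))

lemma dx_ok {M : ℕ} {m : AMono} (s : ℝ) (h : m.ok M) :
    ∀ m' ∈ m.dx s, m'.ok (M+1) := by
  intro m' hm'
  rcases h with h | ⟨h1, h2, h3, h4⟩
  · simp only [AMono.dx, List.mem_cons, List.mem_singleton, List.not_mem_nil, or_false] at hm'
    rcases hm' with h'|h'|h'|h'|h' <;> subst h' <;> exact Or.inl (by simp [h])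
  simp only [AMono.dx, List.mem_cons, List.mem_singleton, List.not_mem_nil, or_false] at hm'
  rcases hm' with h'|h'|h'|h'|h' <;> subst h'
  · exact Or.inr ⟨Or.inr (by dsimp only; omega), by dsimp only; omega, by dsimp only; omega, by dsimp only; omega⟩
  · by_cases ha : m.a = 0
    · exact Or.inl (by simp [ha])
    · exact Or.inr ⟨Or.inr (by dsimp only; omega), by dsimp only; omega, by dsimp only; omega, by dsimp only; omega⟩
  · by_cases hb : m.b = 0
    · exact Or.inl (by simp [hb])
    · exact Or.inr ⟨Or.inr (by dsimp only; omega), by dsimp only; omega, by dsimp only; omega, by dsimp only; omega⟩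
  · by_cases hd : m.d = 0
    · exact Or.inl (by simp [hd])
    · exact Or.inr ⟨Or.inr (by dsimp only; omega), by dsimp only; omega, by dsimp only; omega, by dsimp only; omega⟩
  · by_cases he : m.e = 0
    · exact Or.inl (by simp [he])
    · exact Or.inr ⟨Or.inr (by dsimp only; omega), by dsimp only; omega, by dsimp only; omega, by dsimp only; omega⟩

lemma dy_ok {M : ℕ} {m : AMono} (s : ℝ) (h : m.ok M) :
    ∀ m' ∈ m.dy s, m'.ok (M+1) := by
  intro m' hm'
  rcases h with h | ⟨h1, h2, h3, h4⟩
  · simp only [AMono.dy, List.mem_cons, List.mem_singleton, List.not_mem_nil, or_false] at hm'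
    rcases hm' with h'|h'|h'|h'|h' <;> subst h' <;> exact Or.inl (by simp [h])
  simp only [AMono.dy, List.mem_cons, List.mem_singleton, List.not_mem_nil, or_false] at hm'
  rcases hm' with h'|h'|h'|h'|h' <;> subst h'
  · exact Or.inr ⟨Or.inr (by dsimp only; omega), by dsimp only; omega, by dsimp only; omega, by dsimp only; omega⟩
  · by_cases ha : m.a = 0
    · exact Or.inl (by simp [ha])
    · exact Or.inr ⟨Or.inr (by dsimp only; omega), by dsimp only; omega, by dsimp only; omega, by dsimp only; omega⟩
  · by_cases hb : m.b = 0
    · exact Or.inl (by simp [hb])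
    · exact Or.inr ⟨Or.inr (by dsimp only; omega), by dsimp only; omega, by dsimp only; omega, by dsimp only; omega⟩
  · by_cases hd : m.d = 0
    · exact Or.inl (by simp [hd])
    · exact Or.inr ⟨Or.inr (by dsimp only; omega), by dsimp only; omega, by dsimp only; omega, by dsimp only; omega⟩
  · by_cases he : m.e = 0
    · exact Or.inl (by simp [he])
    · exact Or.inr ⟨Or.inr (by dsimp only; omega), by dsimp only; omega, by dsimp only; omega, by dsimp only; omega⟩

lemma hasDerivAt_ev_x (s A u v : ℝ) (m : AMono) (x y : ℝ)
    (hpos : 0 < A + 1 - auxS u v x y) :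
    HasDerivAt (fun x => m.ev s A u v x y)
      (((m.dx s).map (fun m' => m'.ev s A u v x y)).sum) x := by
  have hg : HasDerivAt (fun x => A + 1 - auxS u v x y) (-(auxT u v x y / 2)) x := by
    simpa [Pi.sub_def] using (hasDerivAt_const x (A+1)).sub (hS_x u v x y)
  have hr := hg.rpow_const (p := -s - (m.j:ℝ)) (Or.inl (ne_of_gt hpos))
  have H := ((((((hasDerivAt_const x m.c).mul hr).mul ((hS_x u v x y).pow m.a)).mul
    ((hT_x u v x y).pow m.b)).mul ((hU_x u v x y).pow m.d)).mul ((hV_x u v x y).pow m.e))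
  refine H.congr_deriv ?_
  have hexp : -s - ((m.j:ℝ) + 1) = -s - (m.j:ℝ) - 1 := by ring
  simp only [AMono.dx, AMono.ev, List.map_cons, List.map_nil, List.sum_cons, List.sum_nil, Pi.mul_apply, Pi.pow_apply]
  push_cast
  rw [hexp]
  ring

lemma hasDerivAt_ev_y (s A u v : ℝ) (m : AMono) (x y : ℝ)
    (hpos : 0 < A + 1 - auxS u v x y) :
    HasDerivAt (fun y => m.ev s A u v x y)
      (((m.dy s).map (fun m' => m'.ev s A u v x y)).sum) y := by
  have hg : HasDerivAt (fun y => A + 1 - auxS u v x y) (-(auxU u v x y / 2)) y := by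
    simpa [Pi.sub_def] using (hasDerivAt_const y (A+1)).sub (hS_y u v x y)
  have hr := hg.rpow_const (p := -s - (m.j:ℝ)) (Or.inl (ne_of_gt hpos))
  have H := ((((((hasDerivAt_const y m.c).mul hr).mul ((hS_y u v x y).pow m.a)).mul
    ((hT_y u v x y).pow m.b)).mul ((hU_y u v x y).pow m.d)).mul ((hV_y u v x y).pow m.e))
  refine H.congr_deriv ?_
  have hexp : -s - ((m.j:ℝ) + 1) = -s - (m.j:ℝ) - 1 := by ring
  simp only [AMono.dy, AMono.ev, List.map_cons, List.map_nil, List.sum_cons, List.sum_nil, Pi.mul_apply, Pi.pow_apply]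
  push_cast
  rw [hexp]
  ring

lemma list_hasDerivAt (l : List AMono) (F : AMono → ℝ → ℝ) (F' : AMono → ℝ) (x : ℝ)
    (h : ∀ m ∈ l, HasDerivAt (F m) (F' m) x) :
    HasDerivAt (fun x => (l.map (fun m => F m x)).sum) ((l.map F').sum) x := by
  induction l with
  | nil => simpa using hasDerivAt_const x (0:ℝ)
  | cons a l ih =>
    simp only [List.map_cons, List.sum_cons]
    exact (h a (by simp)).add (ih (fun m hm => h m (by simp [hm])))

lemma list_sum_flatMap (l : List AMono) (g : AMono → List AMono) (f : AMono → ℝ) :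
    ((l.flatMap g).map f).sum = (l.map (fun a => ((g a).map f).sum)).sum := by
  induction l with
  | nil => simp
  | cons a l ih => simp [List.flatMap_cons, ih]

lemma rep (s : ℝ) (N : ℕ) : ∃ L : List AMono, (∀ m ∈ L, m.ok N) ∧
    ∀ A u v : ℝ, 0 < A → |u| ≤ 1 → |v| ≤ 1 → (∀ x y : ℝ, 0 < A + 1 - auxS u v x y) →
    ∀ y x : ℝ, iteratedDeriv N (fun x => (A + 1 - auxS u v x y) ^ (-s)) x
      = (L.map (fun m => m.ev s A u v x y)).sum := by
  induction N with
  | zero =>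
    refine ⟨[⟨1,0,0,0,0,0⟩], ?_, ?_⟩
    · intro m hm; simp at hm; subst hm; exact Or.inr ⟨Or.inl rfl, by dsimp only; omega, by dsimp only; omega, by dsimp only; omega⟩
    · intro A u v hA hu hv hg y x
      simp [AMono.ev]
  | succ N ih =>
    obtain ⟨L, hok, hrep⟩ := ih
    refine ⟨L.flatMap (AMono.dx s), ?_, ?_⟩
    · intro m' hm'
      rw [List.mem_flatMap] at hm'
      obtain ⟨m, hm, hm'⟩ := hm'
      exact dx_ok s (hok m hm) m' hm'
    · intro A u v hA hu hv hg y x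
      rw [iteratedDeriv_succ]
      have hfun : iteratedDeriv N (fun x => (A + 1 - auxS u v x y) ^ (-s))
          = fun x => (L.map (fun m => m.ev s A u v x y)).sum := by
        funext x'; exact hrep A u v hA hu hv hg y x'
      rw [hfun]
      have H := list_hasDerivAt L (fun m x => m.ev s A u v x y)
        (fun m => ((m.dx s).map (fun m' => m'.ev s A u v x y)).sum) x
        (fun m _ => hasDerivAt_ev_x s A u v m x y (hg x y))
      rw [H.deriv, list_sum_flatMap]

theorem key2 (a b sx cx sy cy : ℝ) (h1 : sx^2 + cx^2 = 1) (h2 : sy^2 + cy^2 = 1)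
    (h3 : |a| + |b| ≤ 1) : (a*sx + b*sy)^2 ≤ 2*(1 - (a*cx + b*cy)) := by
  have ha : |a| * sx^2 ≤ 2*(|a| - a*cx) := by
    rcases abs_cases a with ⟨h, _⟩ | ⟨h, _⟩ <;> nlinarith [sq_nonneg (1 - cx), sq_nonneg (1 + cx)]
  have hb : |b| * sy^2 ≤ 2*(|b| - b*cy) := by
    rcases abs_cases b with ⟨h, _⟩ | ⟨h, _⟩ <;> nlinarith [sq_nonneg (1 - cy), sq_nonneg (1 + cy)]
  have h4 : a*b*(sx*sy) ≤ |a| * |b| * (|sx| * |sy|) := by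
    calc a*b*(sx*sy) ≤ |a*b*(sx*sy)| := le_abs_self _
    _ = |a| * |b| * (|sx| * |sy|) := by rw [abs_mul, abs_mul, abs_mul]
  have h5 : 2 * (|a| * |b| * (|sx| * |sy|)) ≤ |a| * |b| * (sx^2 + sy^2) := by
    nlinarith [sq_nonneg (|sx| - |sy|), mul_nonneg (abs_nonneg a) (abs_nonneg b), sq_abs sx, sq_abs sy]
  have hcs : (a*sx + b*sy)^2 ≤ (|a| + |b|) * (|a| * sx^2 + |b| * sy^2) := by
    nlinarith [h4, h5, sq_abs a, sq_abs b]
  have hX : 0 ≤ |a| * sx^2 + |b| * sy^2 := by positivity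
  nlinarith [abs_nonneg a, abs_nonneg b]

lemma cs1 (p q r w : ℝ) (h1 : p^2 + q^2 ≤ 1) (h2 : r^2 + w^2 ≤ 1) : |p*r + q*w| ≤ 1 := by
  rw [abs_le]
  constructor <;> nlinarith [sq_nonneg (p*w - q*r), sq_nonneg (p*r + q*w + 1), sq_nonneg (p*r + q*w - 1)]

lemma pq_bound (u v y : ℝ) (hu : |u| ≤ 1) (hv : |v| ≤ 1) :
    (u * Real.sin (y/2))^2 + (v * Real.cos (y/2))^2 ≤ 1 := by
  have h1 := Real.sin_sq_add_cos_sq (y/2)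
  have hu2 : u^2 ≤ 1 := by nlinarith [abs_le.1 hu, abs_nonneg u, sq_abs u, le_abs_self u, neg_abs_le u]
  have hv2 : v^2 ≤ 1 := by nlinarith [abs_le.1 hv, abs_nonneg v, sq_abs v, le_abs_self v, neg_abs_le v]
  nlinarith [sq_nonneg (Real.sin (y/2)), sq_nonneg (Real.cos (y/2))]

lemma absS_le (u v x y : ℝ) (hu : |u| ≤ 1) (hv : |v| ≤ 1) : |auxS u v x y| ≤ 1 := by
  have := cs1 (u * Real.sin (y/2)) (v * Real.cos (y/2)) (Real.sin (x/2)) (Real.cos (x/2))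
    (pq_bound u v y hu hv) (by rw [Real.sin_sq_add_cos_sq])
  calc |auxS u v x y| = |u * Real.sin (y/2) * Real.sin (x/2) + v * Real.cos (y/2) * Real.cos (x/2)| := by
        unfold auxS; ring_nf
    _ ≤ 1 := this

lemma absT_le (u v x y : ℝ) (hu : |u| ≤ 1) (hv : |v| ≤ 1) : |auxT u v x y| ≤ 1 := by
  have := cs1 (u * Real.sin (y/2)) (v * Real.cos (y/2)) (Real.cos (x/2)) (-Real.sin (x/2))
    (pq_bound u v y hu hv) (by simp [Real.cos_sq_add_sin_sq])
  calc |auxT u v x y| = |u * Real.sin (y/2) * Real.cos (x/2) + v * Real.cos (y/2) * -Real.sin (x/2)| := by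
        unfold auxT; ring_nf
    _ ≤ 1 := this

lemma absU_le (u v x y : ℝ) (hu : |u| ≤ 1) (hv : |v| ≤ 1) : |auxU u v x y| ≤ 1 := by
  have := cs1 (u * Real.cos (y/2)) (v * Real.sin (y/2)) (Real.sin (x/2)) (-Real.cos (x/2))
    (by have := pq_bound v u y hv hu; nlinarith [this]) (by simp [Real.sin_sq_add_cos_sq])
  calc |auxU u v x y| = |u * Real.cos (y/2) * Real.sin (x/2) + v * Real.sin (y/2) * -Real.cos (x/2)| := by
        unfold auxU; ring_nf
    _ ≤ 1 := this

lemma absV_le (u v x y : ℝ) (hu : |u| ≤ 1) (hv : |v| ≤ 1) : |auxV u v x y| ≤ 1 := by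
  have := cs1 (u * Real.cos (y/2)) (v * Real.sin (y/2)) (Real.cos (x/2)) (Real.sin (x/2))
    (by have := pq_bound v u y hv hu; nlinarith [this]) (by rw [Real.cos_sq_add_sin_sq])
  calc |auxV u v x y| = |u * Real.cos (y/2) * Real.cos (x/2) + v * Real.sin (y/2) * Real.sin (x/2)| := by
        unfold auxV; ring_nf
    _ ≤ 1 := this

lemma Tsq_le (u v x y : ℝ) (hu : |u| ≤ 1) (hv : |v| ≤ 1) :
    auxT u v x y ^ 2 ≤ 2 * (1 - auxS u v x y) := by
  set sx := Real.sin (x/2) * Real.cos (y/2) - Real.cos (x/2) * Real.sin (y/2) with hsx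
  set cx := Real.cos (x/2) * Real.cos (y/2) + Real.sin (x/2) * Real.sin (y/2) with hcx
  set sy := Real.sin (x/2) * Real.cos (y/2) + Real.cos (x/2) * Real.sin (y/2) with hsy
  set cy := Real.cos (x/2) * Real.cos (y/2) - Real.sin (x/2) * Real.sin (y/2) with hcy
  have h1 : sx^2 + cx^2 = 1 := by
    rw [hsx, hcx]; nlinarith [Real.sin_sq_add_cos_sq (x/2), Real.sin_sq_add_cos_sq (y/2)]
  have h2 : sy^2 + cy^2 = 1 := by
    rw [hsy, hcy]; nlinarith [Real.sin_sq_add_cos_sq (x/2), Real.sin_sq_add_cos_sq (y/2)]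
  have h3 : |(u+v)/2| + |(v-u)/2| ≤ 1 := by
    rcases abs_cases ((u+v)/2) with ⟨h, _⟩ | ⟨h, _⟩ <;>
      rcases abs_cases ((v-u)/2) with ⟨h', _⟩ | ⟨h', _⟩ <;>
      rcases abs_le.1 hu with ⟨hu1, hu2⟩ <;> rcases abs_le.1 hv with ⟨hv1, hv2⟩ <;> linarith
  have hk := key2 ((u+v)/2) ((v-u)/2) sx cx sy cy h1 h2 h3
  have hT : auxT u v x y = -(((u+v)/2)*sx + ((v-u)/2)*sy) := by
    rw [hsx, hsy]; unfold auxT; ring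
  have hS : auxS u v x y = ((u+v)/2)*cx + ((v-u)/2)*cy := by
    rw [hcx, hcy]; unfold auxS; ring
  rw [hT, hS]; nlinarith [hk]

lemma auxU_eq (u v x y : ℝ) : auxU u v x y = auxT u v y x := by unfold auxU auxT; ring
lemma auxS_symm (u v x y : ℝ) : auxS u v y x = auxS u v x y := by unfold auxS; ring

lemma Usq_le (u v x y : ℝ) (hu : |u| ≤ 1) (hv : |v| ≤ 1) :
    auxU u v x y ^ 2 ≤ 2 * (1 - auxS u v x y) := by
  rw [auxU_eq, ← auxS_symm]; exact Tsq_le u v y x hu hv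

lemma mono_core_small (s G S T U V : ℝ) (M j a b d e : ℕ) (hG : 0 < G) (hG3 : G ≤ 3)
    (hS : |S| ≤ 1) (hV : |V| ≤ 1) (hT : T^2 ≤ 2*G) (hU : U^2 ≤ 2*G)
    (h2 : j ≤ M) (h3 : a + b + d + e ≤ 2*j) (h4 : 2*j ≤ M + (b + d)) :
    G ^ (-s - (j:ℝ)) * |S|^a * |T|^b * |U|^d * |V|^e
      ≤ (2:ℝ)^(M:ℝ) * 3^(M:ℝ) * G ^ (-s - (M:ℝ)/2) := by
  have hGp : (0:ℝ) < G ^ (-s - (j:ℝ)) := Real.rpow_pos_of_pos hG _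
  have hTb : |T| ≤ Real.sqrt (2*G) := Real.abs_le_sqrt hT
  have hUb : |U| ≤ Real.sqrt (2*G) := Real.abs_le_sqrt hU
  have step1 : G ^ (-s - (j:ℝ)) * |S|^a * |T|^b * |U|^d * |V|^e
      ≤ G ^ (-s - (j:ℝ)) * 1^a * Real.sqrt (2*G)^b * Real.sqrt (2*G)^d * 1^e := by
    gcongr <;> first | exact abs_nonneg _ | assumption
  have hsqrt : Real.sqrt (2*G) ^ b * Real.sqrt (2*G) ^ d
      = (2:ℝ)^(((b:ℝ)+(d:ℝ))/2) * G^(((b:ℝ)+(d:ℝ))/2) := by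
    rw [← pow_add, Real.sqrt_eq_rpow, ← Real.rpow_natCast ((2*G) ^ (1/2:ℝ)) (b+d),
      ← Real.rpow_mul (by positivity), Real.mul_rpow (by norm_num) hG.le]
    push_cast
    ring_nf
  have e1 : G ^ (-s - (j:ℝ)) * G^(((b:ℝ)+(d:ℝ))/2)
      = G ^ (-s - (M:ℝ)/2) * G ^ ((M:ℝ)/2 + ((b:ℝ)+(d:ℝ))/2 - (j:ℝ)) := by
    rw [← Real.rpow_add hG, ← Real.rpow_add hG]; ring_nf
  have step2 : G ^ (-s - (j:ℝ)) * 1^a * Real.sqrt (2*G)^b * Real.sqrt (2*G)^d * 1^e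
      = (2:ℝ)^(((b:ℝ)+(d:ℝ))/2) * (G ^ (-s - (M:ℝ)/2) * G ^ ((M:ℝ)/2 + ((b:ℝ)+(d:ℝ))/2 - (j:ℝ))) := by
    rw [← e1]
    rw [one_pow, one_pow, mul_one, mul_one, mul_assoc, hsqrt]
    ring
  have hδ0 : (0:ℝ) ≤ (M:ℝ)/2 + ((b:ℝ)+(d:ℝ))/2 - (j:ℝ) := by
    have : (2*j : ℝ) ≤ (M:ℝ) + ((b:ℝ)+(d:ℝ)) := by exact_mod_cast h4
    linarith
  have hj : (j:ℝ) ≤ (M:ℝ) := by exact_mod_cast h2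
  have hbd : (b:ℝ)+(d:ℝ) ≤ 2*(j:ℝ) := by exact_mod_cast (by omega : b + d ≤ 2*j)
  have hδM : (M:ℝ)/2 + ((b:ℝ)+(d:ℝ))/2 - (j:ℝ) ≤ (M:ℝ) := by linarith
  have hkM : ((b:ℝ)+(d:ℝ))/2 ≤ (M:ℝ) := by linarith
  have b1 : (2:ℝ)^(((b:ℝ)+(d:ℝ))/2) ≤ (2:ℝ)^(M:ℝ) :=
    Real.rpow_le_rpow_of_exponent_le (by norm_num) hkM
  have b2 : G ^ ((M:ℝ)/2 + ((b:ℝ)+(d:ℝ))/2 - (j:ℝ)) ≤ (3:ℝ)^(M:ℝ) := by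
    calc G ^ ((M:ℝ)/2 + ((b:ℝ)+(d:ℝ))/2 - (j:ℝ)) ≤ (3:ℝ) ^ ((M:ℝ)/2 + ((b:ℝ)+(d:ℝ))/2 - (j:ℝ)) :=
          Real.rpow_le_rpow hG.le hG3 hδ0
      _ ≤ (3:ℝ)^(M:ℝ) := Real.rpow_le_rpow_of_exponent_le (by norm_num) hδM
  calc G ^ (-s - (j:ℝ)) * |S|^a * |T|^b * |U|^d * |V|^e
      ≤ (2:ℝ)^(((b:ℝ)+(d:ℝ))/2) * (G ^ (-s - (M:ℝ)/2) * G ^ ((M:ℝ)/2 + ((b:ℝ)+(d:ℝ))/2 - (j:ℝ))) := by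
        rw [← step2]; exact step1
    _ ≤ (2:ℝ)^(M:ℝ) * (G ^ (-s - (M:ℝ)/2) * (3:ℝ)^(M:ℝ)) := by
        have hp1 : (0:ℝ) ≤ G ^ (-s - (M:ℝ)/2) := (Real.rpow_pos_of_pos hG _).le
        have hp2 : (0:ℝ) ≤ G ^ ((M:ℝ)/2 + ((b:ℝ)+(d:ℝ))/2 - (j:ℝ)) := (Real.rpow_pos_of_pos hG _).le
        have hp3 : (0:ℝ) < (2:ℝ)^(((b:ℝ)+(d:ℝ))/2) := Real.rpow_pos_of_pos (by norm_num) _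
        gcongr
    _ = (2:ℝ)^(M:ℝ) * 3^(M:ℝ) * G ^ (-s - (M:ℝ)/2) := by ring

lemma mono_core_large (s G S T U V c0 : ℝ) (M j a b d e : ℕ) (hG : 0 < G)
    (hc0 : 0 < c0) (hc0G : c0 ≤ G) (hc01 : c0 ≤ 1)
    (hS : |S| ≤ 1) (hV : |V| ≤ 1) (hT : T^2 ≤ 2*G) (hU : U^2 ≤ 2*G)
    (hT1 : |T| ≤ 1) (hU1 : |U| ≤ 1)
    (h1 : 1 ≤ j) (h2 : j ≤ M) (h3 : a + b + d + e ≤ 2*j) (h4 : 2*j ≤ M + (b + d)) :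
    G ^ (-s - (j:ℝ)) * |S|^a * |T|^b * |U|^d * |V|^e
      ≤ ((2:ℝ)^(M:ℝ) * c0^(-(M:ℝ)) + 1) * G ^ (-s - 1/2) := by
  have hGp : (0:ℝ) < G ^ (-s - (j:ℝ)) := Real.rpow_pos_of_pos hG _
  have hGhalf : (0:ℝ) < G ^ (-s - 1/2) := Real.rpow_pos_of_pos hG _
  have hc0M : (0:ℝ) < c0^(-(M:ℝ)) := Real.rpow_pos_of_pos hc0 _
  have h2M : (0:ℝ) < (2:ℝ)^(M:ℝ) := Real.rpow_pos_of_pos (by norm_num) _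
  rcases le_or_gt G 1 with hG1 | hG1
  · -- G ≤ 1 : use sqrt bounds
    have hTb : |T| ≤ Real.sqrt (2*G) := Real.abs_le_sqrt hT
    have hUb : |U| ≤ Real.sqrt (2*G) := Real.abs_le_sqrt hU
    have step1 : G ^ (-s - (j:ℝ)) * |S|^a * |T|^b * |U|^d * |V|^e
        ≤ G ^ (-s - (j:ℝ)) * 1^a * Real.sqrt (2*G)^b * Real.sqrt (2*G)^d * 1^e := by
      gcongr <;> exact abs_nonneg _
    have hsqrt : Real.sqrt (2*G) ^ b * Real.sqrt (2*G) ^ d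
        = (2:ℝ)^(((b:ℝ)+(d:ℝ))/2) * G^(((b:ℝ)+(d:ℝ))/2) := by
      rw [← pow_add, Real.sqrt_eq_rpow, ← Real.rpow_natCast ((2*G) ^ (1/2:ℝ)) (b+d),
        ← Real.rpow_mul (by positivity), Real.mul_rpow (by norm_num) hG.le]
      push_cast
      ring_nf
    have e1 : G ^ (-s - (j:ℝ)) * G^(((b:ℝ)+(d:ℝ))/2)
        = G ^ (-s - 1/2) * G ^ (1/2 + ((b:ℝ)+(d:ℝ))/2 - (j:ℝ)) := by
      rw [← Real.rpow_add hG, ← Real.rpow_add hG]; ring_nf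
    have step2 : G ^ (-s - (j:ℝ)) * 1^a * Real.sqrt (2*G)^b * Real.sqrt (2*G)^d * 1^e
        = (2:ℝ)^(((b:ℝ)+(d:ℝ))/2) * (G ^ (-s - 1/2) * G ^ (1/2 + ((b:ℝ)+(d:ℝ))/2 - (j:ℝ))) := by
      rw [← e1, one_pow, one_pow, mul_one, mul_one, mul_assoc, hsqrt]
      ring
    have hj : (j:ℝ) ≤ (M:ℝ) := by exact_mod_cast h2
    have hbd : (b:ℝ)+(d:ℝ) ≤ 2*(j:ℝ) := by exact_mod_cast (by omega : b + d ≤ 2*j)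
    have hkM : ((b:ℝ)+(d:ℝ))/2 ≤ (M:ℝ) := by linarith
    have b1 : (2:ℝ)^(((b:ℝ)+(d:ℝ))/2) ≤ (2:ℝ)^(M:ℝ) :=
      Real.rpow_le_rpow_of_exponent_le (by norm_num) hkM
    have hδlow : -(M:ℝ) ≤ 1/2 + ((b:ℝ)+(d:ℝ))/2 - (j:ℝ) := by
      have hb0 : (0:ℝ) ≤ (b:ℝ)+(d:ℝ) := by positivity
      linarith
    have b2 : G ^ (1/2 + ((b:ℝ)+(d:ℝ))/2 - (j:ℝ)) ≤ c0^(-(M:ℝ)) := by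
      calc G ^ (1/2 + ((b:ℝ)+(d:ℝ))/2 - (j:ℝ)) ≤ G ^ (-(M:ℝ)) :=
            Real.rpow_le_rpow_of_exponent_ge hG hG1 hδlow
        _ ≤ c0^(-(M:ℝ)) := by
            rw [Real.rpow_neg hG.le, Real.rpow_neg hc0.le]
            have hGM : c0^(M:ℝ) ≤ G^(M:ℝ) := Real.rpow_le_rpow hc0.le hc0G (by positivity)
            exact inv_anti₀ (Real.rpow_pos_of_pos hc0 _) hGM
    calc G ^ (-s - (j:ℝ)) * |S|^a * |T|^b * |U|^d * |V|^e
        ≤ (2:ℝ)^(((b:ℝ)+(d:ℝ))/2) * (G ^ (-s - 1/2) * G ^ (1/2 + ((b:ℝ)+(d:ℝ))/2 - (j:ℝ))) := by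
          rw [← step2]; exact step1
      _ ≤ (2:ℝ)^(M:ℝ) * (G ^ (-s - 1/2) * c0^(-(M:ℝ))) := by
          have hp2 : (0:ℝ) ≤ G ^ (1/2 + ((b:ℝ)+(d:ℝ))/2 - (j:ℝ)) := (Real.rpow_pos_of_pos hG _).le
          have hp3 : (0:ℝ) < (2:ℝ)^(((b:ℝ)+(d:ℝ))/2) := Real.rpow_pos_of_pos (by norm_num) _
          gcongr
      _ ≤ ((2:ℝ)^(M:ℝ) * c0^(-(M:ℝ)) + 1) * G ^ (-s - 1/2) := by nlinarith
  · -- 1 < G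
    have step1 : G ^ (-s - (j:ℝ)) * |S|^a * |T|^b * |U|^d * |V|^e
        ≤ G ^ (-s - (j:ℝ)) * 1^a * 1^b * 1^d * 1^e := by
      gcongr <;> exact abs_nonneg _
    have hj1 : (1:ℝ) ≤ (j:ℝ) := by exact_mod_cast h1
    have step2 : G ^ (-s - (j:ℝ)) ≤ G ^ (-s - 1/2) :=
      Real.rpow_le_rpow_of_exponent_le hG1.le (by linarith)
    calc G ^ (-s - (j:ℝ)) * |S|^a * |T|^b * |U|^d * |V|^e
        ≤ G ^ (-s - (j:ℝ)) := by simpa using step1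
      _ ≤ G ^ (-s - 1/2) := step2
      _ ≤ ((2:ℝ)^(M:ℝ) * c0^(-(M:ℝ)) + 1) * G ^ (-s - 1/2) := by nlinarith [mul_nonneg (mul_pos h2M hc0M).le hGhalf.le]

lemma mono_ev_bound_small (s A u v θ φ : ℝ) (M : ℕ) (m : AMono) (hok : m.ok M)
    (hu : |u| ≤ 1) (hv : |v| ≤ 1) (hA : 0 < A) (hA1 : A ≤ 1) :
    |m.ev s A u v θ φ| ≤ |m.c| * ((2:ℝ)^(M:ℝ) * 3^(M:ℝ)) *
      (A + 1 - auxS u v θ φ) ^ (-s - (M:ℝ)/2) := by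
  have hS1 := absS_le u v θ φ hu hv
  have hT1 := absT_le u v θ φ hu hv
  have hU1 := absU_le u v θ φ hu hv
  have hV1 := absV_le u v θ φ hu hv
  have hSle := abs_le.1 hS1
  have hG : 0 < A + 1 - auxS u v θ φ := by linarith
  have hG3 : A + 1 - auxS u v θ φ ≤ 3 := by linarith
  have hT2 : auxT u v θ φ ^ 2 ≤ 2 * (A + 1 - auxS u v θ φ) := by
    have := Tsq_le u v θ φ hu hv; linarith
  have hU2 : auxU u v θ φ ^ 2 ≤ 2 * (A + 1 - auxS u v θ φ) := by
    have := Usq_le u v θ φ hu hv; linarith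
  rcases hok with h0 | ⟨_, h2, h3, h4⟩
  · simp [AMono.ev, h0]
  · have core := mono_core_small s (A + 1 - auxS u v θ φ) (auxS u v θ φ) (auxT u v θ φ)
      (auxU u v θ φ) (auxV u v θ φ) M m.j m.a m.b m.d m.e hG hG3 hS1 hV1 hT2 hU2 h2 h3 h4
    calc |m.ev s A u v θ φ|
        = |m.c| * ((A + 1 - auxS u v θ φ) ^ (-s - (m.j:ℝ)) * |auxS u v θ φ|^m.a *
            |auxT u v θ φ|^m.b * |auxU u v θ φ|^m.d * |auxV u v θ φ|^m.e) := by
          simp only [AMono.ev]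
          rw [abs_mul, abs_mul, abs_mul, abs_mul, abs_mul, abs_pow, abs_pow, abs_pow, abs_pow,
            abs_of_pos (Real.rpow_pos_of_pos hG _)]
          ring
      _ ≤ |m.c| * ((2:ℝ)^(M:ℝ) * 3^(M:ℝ) * (A + 1 - auxS u v θ φ) ^ (-s - (M:ℝ)/2)) :=
          mul_le_mul_of_nonneg_left core (abs_nonneg _)
      _ = |m.c| * ((2:ℝ)^(M:ℝ) * 3^(M:ℝ)) * (A + 1 - auxS u v θ φ) ^ (-s - (M:ℝ)/2) := by ring

lemma mono_ev_bound_large (s A u v θ φ c0 : ℝ) (M : ℕ) (m : AMono) (hok : m.ok M)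
    (hu : |u| ≤ 1) (hv : |v| ≤ 1) (hA : 0 < A) (hM : 1 ≤ M)
    (hc0 : 0 < c0) (hc0A : c0 ≤ A) (hc01 : c0 ≤ 1) :
    |m.ev s A u v θ φ| ≤ |m.c| * ((2:ℝ)^(M:ℝ) * c0^(-(M:ℝ)) + 1) *
      (A + 1 - auxS u v θ φ) ^ (-s - 1/2) := by
  have hS1 := absS_le u v θ φ hu hv
  have hT1 := absT_le u v θ φ hu hv
  have hU1 := absU_le u v θ φ hu hv
  have hV1 := absV_le u v θ φ hu hv
  have hSle := abs_le.1 hS1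
  have hG : 0 < A + 1 - auxS u v θ φ := by linarith
  have hc0G : c0 ≤ A + 1 - auxS u v θ φ := by linarith
  have hT2 : auxT u v θ φ ^ 2 ≤ 2 * (A + 1 - auxS u v θ φ) := by
    have := Tsq_le u v θ φ hu hv; linarith
  have hU2 : auxU u v θ φ ^ 2 ≤ 2 * (A + 1 - auxS u v θ φ) := by
    have := Usq_le u v θ φ hu hv; linarith
  rcases hok with h0 | ⟨h1, h2, h3, h4⟩
  · simp [AMono.ev, h0]
  · have hj1 : 1 ≤ m.j := by omega
    have core := mono_core_large s (A + 1 - auxS u v θ φ) (auxS u v θ φ) (auxT u v θ φ)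
      (auxU u v θ φ) (auxV u v θ φ) c0 M m.j m.a m.b m.d m.e hG hc0 hc0G hc01
      hS1 hV1 hT2 hU2 hT1 hU1 hj1 h2 h3 h4
    calc |m.ev s A u v θ φ|
        = |m.c| * ((A + 1 - auxS u v θ φ) ^ (-s - (m.j:ℝ)) * |auxS u v θ φ|^m.a *
            |auxT u v θ φ|^m.b * |auxU u v θ φ|^m.d * |auxV u v θ φ|^m.e) := by
          simp only [AMono.ev]
          rw [abs_mul, abs_mul, abs_mul, abs_mul, abs_mul, abs_pow, abs_pow, abs_pow, abs_pow,
            abs_of_pos (Real.rpow_pos_of_pos hG _)]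
          ring
      _ ≤ |m.c| * (((2:ℝ)^(M:ℝ) * c0^(-(M:ℝ)) + 1) * (A + 1 - auxS u v θ φ) ^ (-s - 1/2)) :=
          mul_le_mul_of_nonneg_left core (abs_nonneg _)
      _ = |m.c| * ((2:ℝ)^(M:ℝ) * c0^(-(M:ℝ)) + 1) * (A + 1 - auxS u v θ φ) ^ (-s - 1/2) := by ring

lemma list_abs_sum (l : List AMono) (f : AMono → ℝ) :
    |(l.map f).sum| ≤ (l.map (fun m => |f m|)).sum := by
  induction l with
  | nil => simp
  | cons a l ih =>
    simp only [List.map_cons, List.sum_cons]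
    exact (abs_add_le _ _).trans (by linarith)

theorem stmt16' (α β : ℝ) (N : ℕ) :
    ∃ C : ℝ, 0 < C ∧ ∀ θ φ u v t : ℝ, θ ∈ Set.Ioo 0 π → φ ∈ Set.Ioo 0 π →
      u ∈ Set.Icc (-1 : ℝ) 1 → v ∈ Set.Icc (-1 : ℝ) 1 → 0 < t →
      (t ≤ 1 →
        |deriv (fun y => iteratedDeriv N
            (fun x => (Real.cosh (t / 2) - 1 + (1 - u * (Real.sin (x / 2) * Real.sin (y / 2)) - v * (Real.cos (x / 2) * Real.cos (y / 2)))) ^ (-(α + β + 2))) θ) φ|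
          ≤ C * (Real.cosh (t / 2) - 1 + (1 - u * (Real.sin (θ / 2) * Real.sin (φ / 2)) - v * (Real.cos (θ / 2) * Real.cos (φ / 2)))) ^ (-(α + β + 5/2 + (N : ℝ) / 2))) ∧
      (1 < t →
        |deriv (fun y => iteratedDeriv N
            (fun x => (Real.cosh (t / 2) - 1 + (1 - u * (Real.sin (x / 2) * Real.sin (y / 2)) - v * (Real.cos (x / 2) * Real.cos (y / 2)))) ^ (-(α + β + 2))) θ) φ|
          ≤ C * (Real.cosh (t / 2) - 1 + (1 - u * (Real.sin (θ / 2) * Real.sin (φ / 2)) - v * (Real.cos (θ / 2) * Real.cos (φ / 2)))) ^ (-(α + β + 5/2))) := by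
  have hs : True := trivial
  set s : ℝ := α + β + 2 with hsdef
  obtain ⟨L, hLok, hLrep⟩ := rep s N
  set M : ℕ := N + 1 with hMdef
  set L2 : List AMono := L.flatMap (AMono.dy s) with hL2def
  have hL2ok : ∀ m ∈ L2, m.ok M := by
    intro m' hm'
    rw [hL2def, List.mem_flatMap] at hm'
    obtain ⟨m, hm, h⟩ := hm'
    exact dy_ok s (hLok m hm) m' h
  set c0 : ℝ := Real.cosh (1/2) - 1 with hc0def
  have hc0 : 0 < c0 := by
    have := Real.one_lt_cosh.2 (by norm_num : (1/2:ℝ) ≠ 0)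
    rw [hc0def]; linarith
  have hcosh2 : Real.cosh (1/2) ≤ 2 := by
    rw [Real.cosh_eq]
    nlinarith [Real.exp_one_lt_d9, Real.exp_pos (-(1/2):ℝ),
      Real.exp_le_exp.2 (by norm_num : (1/2:ℝ) ≤ 1),
      Real.exp_le_exp.2 (by norm_num : (-(1/2):ℝ) ≤ 0), Real.exp_zero]
  have hc01 : c0 ≤ 1 := by rw [hc0def]; linarith
  set K1 : ℝ := (2:ℝ)^(M:ℝ) * 3^(M:ℝ) with hK1def
  set K2 : ℝ := (2:ℝ)^(M:ℝ) * c0^(-(M:ℝ)) + 1 with hK2def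
  have hK1 : 0 < K1 := by
    rw [hK1def]
    exact mul_pos (Real.rpow_pos_of_pos (by norm_num) _) (Real.rpow_pos_of_pos (by norm_num) _)
  have hK2 : 0 < K2 := by
    rw [hK2def]
    have := Real.rpow_pos_of_pos hc0 (-(M:ℝ))
    have := Real.rpow_pos_of_pos (by norm_num : (0:ℝ) < 2) ((M:ℕ):ℝ)
    nlinarith
  set SC : ℝ := (L2.map (fun m => |m.c|)).sum with hSCdef
  have hSC : 0 ≤ SC := by
    rw [hSCdef]
    apply List.sum_nonneg
    intro x hx
    simp only [List.mem_map] at hx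
    obtain ⟨m, _, rfl⟩ := hx
    exact abs_nonneg _
  refine ⟨(SC + 1) * (K1 + K2), by positivity, ?_⟩
  intro θ φ u v t hθ hφ hu hv ht
  have hu1 : |u| ≤ 1 := abs_le.2 ⟨hu.1, hu.2⟩
  have hv1 : |v| ≤ 1 := abs_le.2 ⟨hv.1, hv.2⟩
  set A : ℝ := Real.cosh (t/2) - 1 with hAdef
  have hA : 0 < A := by
    have := Real.one_lt_cosh.2 (by positivity : t/2 ≠ 0)
    rw [hAdef]; linarith
  have hgpos : ∀ x y : ℝ, 0 < A + 1 - auxS u v x y := by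
    intro x y
    have := abs_le.1 (absS_le u v x y hu1 hv1)
    linarith [this.2]
  have hbase : ∀ x y : ℝ,
      Real.cosh (t/2) - 1 + (1 - u * (Real.sin (x / 2) * Real.sin (y / 2)) - v * (Real.cos (x / 2) * Real.cos (y / 2)))
        = A + 1 - auxS u v x y := by
    intro x y; rw [hAdef]; unfold auxS; ring
  have hfun : (fun y => iteratedDeriv N
      (fun x => (Real.cosh (t / 2) - 1 + (1 - u * (Real.sin (x / 2) * Real.sin (y / 2)) - v * (Real.cos (x / 2) * Real.cos (y / 2)))) ^ (-(α + β + 2))) θ)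
      = fun y => (L.map (fun m => m.ev s A u v θ y)).sum := by
    funext y
    have heq : (fun x => (Real.cosh (t / 2) - 1 + (1 - u * (Real.sin (x / 2) * Real.sin (y / 2)) - v * (Real.cos (x / 2) * Real.cos (y / 2)))) ^ (-(α + β + 2)))
        = fun x => (A + 1 - auxS u v x y) ^ (-s) := by
      funext x; rw [hbase x y, hsdef]
    rw [heq, hLrep A u v hA hu1 hv1 hgpos y θ]
  have H := list_hasDerivAt L (fun m y => m.ev s A u v θ y)
    (fun m => ((m.dy s).map (fun m' => m'.ev s A u v θ φ)).sum) φ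
    (fun m _ => hasDerivAt_ev_y s A u v m θ φ (hgpos θ φ))
  have hDval : deriv (fun y => iteratedDeriv N
      (fun x => (Real.cosh (t / 2) - 1 + (1 - u * (Real.sin (x / 2) * Real.sin (y / 2)) - v * (Real.cos (x / 2) * Real.cos (y / 2)))) ^ (-(α + β + 2))) θ) φ
      = (L2.map (fun m => m.ev s A u v θ φ)).sum := by
    rw [hfun, H.deriv, hL2def, list_sum_flatMap]
  rw [hDval]
  constructor
  · -- t ≤ 1
    intro ht1
    have hA1 : A ≤ 1 := by
      rw [hAdef]
      have : Real.cosh (t/2) ≤ Real.cosh (1/2) := by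
        apply Real.cosh_le_cosh.2
        rw [abs_of_pos (by positivity), abs_of_pos (by norm_num : (0:ℝ) < 1/2)]
        linarith
      linarith
    have hbd : ∀ m ∈ L2, |m.ev s A u v θ φ| ≤ |m.c| * K1 * (A + 1 - auxS u v θ φ) ^ (-s - (M:ℝ)/2) := by
      intro m hm
      exact mono_ev_bound_small s A u v θ φ M m (hL2ok m hm) hu1 hv1 hA hA1
    have hsum : |(L2.map (fun m => m.ev s A u v θ φ)).sum|
        ≤ SC * (K1 * (A + 1 - auxS u v θ φ) ^ (-s - (M:ℝ)/2)) := by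
      calc |(L2.map (fun m => m.ev s A u v θ φ)).sum|
          ≤ (L2.map (fun m => |m.ev s A u v θ φ|)).sum := list_abs_sum _ _
        _ ≤ (L2.map (fun m => |m.c| * (K1 * (A + 1 - auxS u v θ φ) ^ (-s - (M:ℝ)/2)))).sum := by
            apply List.sum_le_sum
            intro m hm
            have := hbd m hm
            linarith [this, (by ring : |m.c| * K1 * (A + 1 - auxS u v θ φ) ^ (-s - (M:ℝ)/2) = |m.c| * (K1 * (A + 1 - auxS u v θ φ) ^ (-s - (M:ℝ)/2)))]
        _ = SC * (K1 * (A + 1 - auxS u v θ φ) ^ (-s - (M:ℝ)/2)) := by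
            rw [hSCdef, ← List.sum_map_mul_right]
    have hexp : -(α + β + 5/2 + (N : ℝ) / 2) = -s - (M:ℝ)/2 := by
      rw [hsdef, hMdef]; push_cast; ring
    rw [hbase θ φ, hexp]
    have hGpos : (0:ℝ) < (A + 1 - auxS u v θ φ) ^ (-s - (M:ℝ)/2) :=
      Real.rpow_pos_of_pos (hgpos θ φ) _
    calc |(L2.map (fun m => m.ev s A u v θ φ)).sum|
        ≤ SC * (K1 * (A + 1 - auxS u v θ φ) ^ (-s - (M:ℝ)/2)) := hsum
      _ ≤ (SC + 1) * (K1 + K2) * (A + 1 - auxS u v θ φ) ^ (-s - (M:ℝ)/2) := by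
          nlinarith [mul_nonneg (mul_nonneg hSC hK2.le) hGpos.le, (mul_pos hK1 hGpos).le,
            (mul_pos hK2 hGpos).le]
  · -- 1 < t
    intro ht1
    have hc0A : c0 ≤ A := by
      rw [hAdef, hc0def]
      have : Real.cosh (1/2) ≤ Real.cosh (t/2) := by
        apply Real.cosh_le_cosh.2
        rw [abs_of_pos (by positivity : (0:ℝ) < (1:ℝ)/2), abs_of_pos (by positivity : (0:ℝ) < t/2)]
        linarith
      linarith
    have hbd : ∀ m ∈ L2, |m.ev s A u v θ φ| ≤ |m.c| * K2 * (A + 1 - auxS u v θ φ) ^ (-s - 1/2) := by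
      intro m hm
      exact mono_ev_bound_large s A u v θ φ c0 M m (hL2ok m hm) hu1 hv1 hA (by omega) hc0 hc0A hc01
    have hsum : |(L2.map (fun m => m.ev s A u v θ φ)).sum|
        ≤ SC * (K2 * (A + 1 - auxS u v θ φ) ^ (-s - 1/2)) := by
      calc |(L2.map (fun m => m.ev s A u v θ φ)).sum|
          ≤ (L2.map (fun m => |m.ev s A u v θ φ|)).sum := list_abs_sum _ _
        _ ≤ (L2.map (fun m => |m.c| * (K2 * (A + 1 - auxS u v θ φ) ^ (-s - 1/2)))).sum := by
            apply List.sum_le_sum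
            intro m hm
            have := hbd m hm
            linarith [this, (by ring : |m.c| * K2 * (A + 1 - auxS u v θ φ) ^ (-s - 1/2) = |m.c| * (K2 * (A + 1 - auxS u v θ φ) ^ (-s - 1/2)))]
        _ = SC * (K2 * (A + 1 - auxS u v θ φ) ^ (-s - 1/2)) := by
            rw [hSCdef, ← List.sum_map_mul_right]
    have hexp : -(α + β + 5/2) = -s - 1/2 := by rw [hsdef]; ring
    rw [hbase θ φ, hexp]
    have hGpos : (0:ℝ) < (A + 1 - auxS u v θ φ) ^ (-s - 1/2) :=
      Real.rpow_pos_of_pos (hgpos θ φ) _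
    calc |(L2.map (fun m => m.ev s A u v θ φ)).sum|
        ≤ SC * (K2 * (A + 1 - auxS u v θ φ) ^ (-s - 1/2)) := hsum
      _ ≤ (SC + 1) * (K1 + K2) * (A + 1 - auxS u v θ φ) ^ (-s - 1/2) := by
          nlinarith [mul_nonneg (mul_nonneg hSC hK1.le) hGpos.le, (mul_pos hK1 hGpos).le,
            (mul_pos hK2 hGpos).le]

end Stmt16Aux

theorem stmt16 (α β : ℝ) (hα : -(1/2) ≤ α) (hβ : -(1/2) ≤ β) (N : ℕ) :
    ∃ C : ℝ, 0 < C ∧ ∀ θ φ u v t : ℝ, θ ∈ Ioo 0 π → φ ∈ Ioo 0 π →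
      u ∈ Icc (-1 : ℝ) 1 → v ∈ Icc (-1 : ℝ) 1 → 0 < t →
      (t ≤ 1 →
        |deriv (fun y => iteratedDeriv N
            (fun x => (Real.cosh (t / 2) - 1 + qK x y u v) ^ (-(α + β + 2))) θ) φ|
          ≤ C * (Real.cosh (t / 2) - 1 + qK θ φ u v) ^ (-(α + β + 5/2 + (N : ℝ) / 2))) ∧
      (1 < t →
        |deriv (fun y => iteratedDeriv N
            (fun x => (Real.cosh (t / 2) - 1 + qK x y u v) ^ (-(α + β + 2))) θ) φ|
          ≤ C * (Real.cosh (t / 2) - 1 + qK θ φ u v) ^ (-(α + β + 5/2))) := by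
  simp only [qK]
  exact stmt16' α β N
end
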